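/- arXiv:2006.00178 — 12 statements merged into one kernel-verified Lean document; each statement's English description precedes it below -/
import Mathlib

section
/- For two agents with monotonic valuations over subsets of a finite set M of m ≥ 1 items, there exist at least two distinct EFX allocations, i.e., ordered partitions (M₁, M₂) of M such that for each agent i, for every item j not in Mᵢ, uᵢ(Mᵢ) ≥ uᵢ(M \ (Mᵢ ∪ {j})). -/
open Finset

/-- Bundle `A` is EF1 for valuation `u` (items `M`). -/
def EF1 {α : Type*} [DecidableEq α] (M : Finset α) (u : Finset α → ℝ) (A : Finset α) : Prop :=
  u (M \ A) ≤ u A ∨ ∃ j ∈ M \ A, u ((M \ A).erase j) ≤ u A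

/-- Bundle `A` is EFX for valuation `u` (items `M`). -/
def EFX {α : Type*} [DecidableEq α] (M : Finset α) (u : Finset α → ℝ) (A : Finset α) : Prop :=
  ∀ j ∈ M \ A, u ((M \ A).erase j) ≤ u A

/-- A bundle weakly preferred to its complement is EFX (for a monotone valuation). -/
lemma efx_of_pref {α : Type*} [DecidableEq α] (M : Finset α) (u : Finset α → ℝ)
    (hum : ∀ A B : Finset α, A ⊆ B → u A ≤ u B) (X : Finset α)
    (h : u (M \ X) ≤ u X) : EFX M u X := fun j _ =>
  le_trans (hum _ _ (Finset.erase_subset _ _)) h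

/-- For two agents with monotonic valuations on `m ≥ 1` items, assuming each agent has an
EFX partition (Plaut–Roughgarden), there exist at least two distinct EFX allocations. -/
theorem two_EFX_allocations {α : Type*} [DecidableEq α] (M : Finset α) (hm : 1 ≤ M.card)
    (u₁ u₂ : Finset α → ℝ) (hu₁0 : u₁ ∅ = 0) (hu₂0 : u₂ ∅ = 0)
    (hu₁m : ∀ A B : Finset α, A ⊆ B → u₁ A ≤ u₁ B)
    (hu₂m : ∀ A B : Finset α, A ⊆ B → u₂ A ≤ u₂ B)
    (hPR₁ : ∃ A ⊆ M, EFX M u₁ A ∧ EFX M u₁ (M \ A))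
    (hPR₂ : ∃ A ⊆ M, EFX M u₂ A ∧ EFX M u₂ (M \ A)) :
    ∃ A ⊆ M, ∃ B ⊆ M, A ≠ B ∧
      (EFX M u₁ A ∧ EFX M u₂ (M \ A)) ∧ (EFX M u₁ B ∧ EFX M u₂ (M \ B)) := by
  obtain ⟨A, hAM, hA1, hA2⟩ := hPR₁
  obtain ⟨B, hBM, hB1, hB2⟩ := hPR₂
  have hAc : M \ (M \ A) = A := Finset.sdiff_sdiff_eq_self hAM
  have hBc : M \ (M \ B) = B := Finset.sdiff_sdiff_eq_self hBM
  -- Allocation 1: agent 2 chooses its preferred side of agent 1's EFX partition.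
  obtain ⟨A₁, hA₁M, hA₁1, hA₁1c, hA₁2⟩ :
      ∃ A₁ ⊆ M, EFX M u₁ A₁ ∧ EFX M u₁ (M \ A₁) ∧ EFX M u₂ (M \ A₁) := by
    rcases le_total (u₂ A) (u₂ (M \ A)) with h | h
    · exact ⟨A, hAM, hA1, hA2, efx_of_pref M u₂ hu₂m _ (by rwa [hAc])⟩
    · exact ⟨M \ A, Finset.sdiff_subset, hA2, by rwa [hAc], by
        rw [hAc]; exact efx_of_pref M u₂ hu₂m _ h⟩
  -- Allocation 2: agent 1 chooses its preferred side of agent 2's EFX partition.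
  obtain ⟨B₁, hB₁M, hB₁1, hB₁2, hB₁2'⟩ :
      ∃ B₁ ⊆ M, EFX M u₁ B₁ ∧ EFX M u₂ (M \ B₁) ∧ EFX M u₂ B₁ := by
    rcases le_total (u₁ B) (u₁ (M \ B)) with h | h
    · exact ⟨M \ B, Finset.sdiff_subset, efx_of_pref M u₁ hu₁m _ (by rwa [hBc]),
        by rwa [hBc], hB2⟩
    · exact ⟨B, hBM, efx_of_pref M u₁ hu₁m _ h, hB2, hB1⟩
  by_cases hne : A₁ = B₁
  · -- Both allocations coincide; then swapping bundles gives a second EFX allocation.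
    refine ⟨A₁, hA₁M, M \ A₁, Finset.sdiff_subset, ?_, ⟨hA₁1, hA₁2⟩,
      hA₁1c, ?_⟩
    · intro h
      have hd : Disjoint A₁ (M \ A₁) := Finset.disjoint_sdiff
      rw [← h] at hd
      have hd := Finset.disjoint_self_iff_empty _ |>.mp hd
      rw [hd, Finset.sdiff_empty] at h
      simp at hm
      exact hm.ne_empty h.symm
    · have hAcc : M \ (M \ A₁) = A₁ := Finset.sdiff_sdiff_eq_self hA₁M
      rw [hAcc, hne]; exact hB₁2'
  · exact ⟨A₁, hA₁M, B₁, hB₁M, hne, ⟨hA₁1, hA₁2⟩, hB₁1, hB₁2⟩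
end

section
/- For any single agent with a monotonic valuation u over subsets of a finite set M, there exists a partition (A, B) of M such that both A and B are EFX for u, i.e., for every j ∈ B, u(A) ≥ u(B \ {j}), and for every j ∈ A, u(B) ≥ u(A \ {j}). -/
/-!
Call `B ⊆ M` poor if `u B ≤ u (M \ B)`. Among the poor bundles take one
maximising `(u B, #B)` lexicographically; its complement is trivially EFX.
For `B` itself, fix `j ∉ B`. The bundle `insert j B` is worth at least `u B` and is strictly larger,
so by maximality it is no longer poorer than its complement `M \ insert j B`; that complement is
therefore a poor bundle, and maximality bounds its value by `u B`, which is EFX for `B` at `j`.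
-/

open Finset

section
variable {α : Type*} [DecidableEq α] {M : Finset α} {u : Finset α → ℝ}

theorem efx_of_compl_le (hum : ∀ A B : Finset α, A ⊆ B → u A ≤ u B) {A : Finset α}
    (h : u (M \ A) ≤ u A) : EFX M u A :=
  fun j _ => (hum _ _ (erase_subset j _)).trans h

theorem efx_of_lex_maximal (hum : ∀ A B : Finset α, A ⊆ B → u A ≤ u B) {B : Finset α}
    (hBM : B ⊆ M)
    (hmax : ∀ C ⊆ M, u C ≤ u (M \ C) → toLex (u C, #C) ≤ toLex (u B, #B)) :
    EFX M u B := by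
  intro j hj
  obtain ⟨hjM, hjB⟩ := mem_sdiff.mp hj
  have hjBM : insert j B ⊆ M := insert_subset hjM hBM
  have h_insert_rich : u (M \ insert j B) < u (insert j B) := by
    by_contra! h_poor
    have hlt : toLex (u B, #B) < toLex (u (insert j B), #(insert j B)) :=
      Prod.Lex.toLex_strictMono <| Prod.mk_lt_mk_of_le_of_lt
        (hum _ _ (subset_insert j B)) (by rw [card_insert_of_notMem hjB]; omega)
    exact (hmax _ hjBM h_poor).not_gt hlt
  have h_compl_poor : u (M \ insert j B) ≤ u (M \ (M \ insert j B)) := by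
    rw [Finset.sdiff_sdiff_eq_self hjBM]
    exact h_insert_rich.le
  rw [← sdiff_insert]
  exact Prod.Lex.monotone_fst _ _ (hmax _ sdiff_subset h_compl_poor)

theorem exists_lex_maximal_poor_bundle (h : u ∅ ≤ u M) :
    ∃ B ⊆ M, u B ≤ u (M \ B) ∧
      ∀ C ⊆ M, u C ≤ u (M \ C) → toLex (u C, #C) ≤ toLex (u B, #B) := by
  have h_empty_poor : ∅ ∈ M.powerset.filter fun B => u B ≤ u (M \ B) := by
    simpa using h
  obtain ⟨B, hB, hmax⟩ := exists_max_image (M.powerset.filter fun B => u B ≤ u (M \ B))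
    (fun B => toLex (u B, #B)) ⟨∅, h_empty_poor⟩
  obtain ⟨hBM, hB_poor⟩ := mem_filter.mp hB
  exact ⟨B, mem_powerset.mp hBM, hB_poor,
    fun C hCM hC => hmax C (mem_filter.mpr ⟨mem_powerset.mpr hCM, hC⟩)⟩

end

theorem exists_EFX_partition_general {α : Type*} [DecidableEq α] (M : Finset α)
    (u : Finset α → ℝ)
    (hum : ∀ A B : Finset α, A ⊆ B → u A ≤ u B) :
    ∃ A ⊆ M, EFX M u A ∧ EFX M u (M \ A) := by
  obtain ⟨B, hBM, hB_poor, hmax⟩ := exists_lex_maximal_poor_bundle (hum _ _ (empty_subset M))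
  refine ⟨B, hBM, efx_of_lex_maximal hum hBM hmax, efx_of_compl_le hum ?_⟩
  rwa [Finset.sdiff_sdiff_eq_self hBM]

/-- For any monotonic valuation `u`, there is a partition `(A, M \ A)` of the items
both of whose parts are EFX for `u`. -/
theorem exists_EFX_partition {α : Type*} [DecidableEq α] (M : Finset α)
    (u : Finset α → ℝ) (hu0 : u ∅ = 0)
    (hum : ∀ A B : Finset α, A ⊆ B → u A ≤ u B) :
    ∃ A ⊆ M, EFX M u A ∧ EFX M u (M \ A) :=
  exists_EFX_partition_general M u hum
end

section
/- Consider m ≥ 1 items where both agents have identical additive valuations: the first m−1 items each have value 1 and the last item has value m. Then there are exactly two EFX allocations: the last item goes to one agent and all other items to the other agent. -/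
open Finset

lemma efx_forward_key (m : ℕ) (last : Fin m) (u : Finset (Fin m) → ℝ)
    (hu : ∀ S : Finset (Fin m),
      u S = ((S.erase last).card : ℝ) + (if last ∈ S then (m : ℝ) else 0))
    (A : Finset (Fin m)) (hA : last ∈ A)
    (h2 : EFX Finset.univ u (Finset.univ \ A)) : A = {last} := by
  have hsub : A ⊆ {last} := by
    intro j hj
    by_contra hjne
    rw [mem_singleton] at hjne
    have hmem : j ∈ Finset.univ \ (Finset.univ \ A) := by
      rw [Finset.sdiff_sdiff_eq_self (subset_univ A)]; exact hj
    have := h2 j hmem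
    rw [Finset.sdiff_sdiff_eq_self (subset_univ A)] at this
    rw [hu, hu] at this
    have hl1 : last ∈ A.erase j := mem_erase.2 ⟨fun h => hjne h.symm, hA⟩
    have hl2 : last ∉ Finset.univ \ A := by simp [hA]
    rw [if_pos hl1, if_neg hl2] at this
    have hnat : ((A.erase j).erase last).card + m ≤ ((Finset.univ \ A).erase last).card := by
      exact_mod_cast (by linarith : (((A.erase j).erase last).card : ℝ) + m ≤
        (((Finset.univ \ A).erase last).card : ℝ))
    have hc2 : ((Finset.univ \ A).erase last).card ≤ (Finset.univ \ A).card := card_erase_le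
    have hcd : (Finset.univ \ A).card = m - A.card := by
      rw [card_sdiff_of_subset (subset_univ A)]; simp
    have hA2 : 2 ≤ A.card := one_lt_card.2 ⟨j, hj, last, hA, hjne⟩
    have hAm : A.card ≤ m := by simpa using card_le_univ A
    omega
  exact le_antisymm hsub (singleton_subset_iff.2 hA)

/-- With identical additive valuations giving value `1` to each of the first `m - 1` items
and value `m` to the last item, there are exactly two EFX allocations: the last item to one
agent and all the other items to the other agent. -/
theorem EFX_allocations_of_one_big_item (m : ℕ) (hm : 1 ≤ m) (last : Fin m)
    (hlast : (last : ℕ) = m - 1) (u : Finset (Fin m) → ℝ)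
    (hu : ∀ S : Finset (Fin m),
      u S = ((S.erase last).card : ℝ) + (if last ∈ S then (m : ℝ) else 0)) :
    ∀ A : Finset (Fin m),
      (EFX Finset.univ u A ∧ EFX Finset.univ u (Finset.univ \ A)) ↔
        (A = {last} ∨ A = Finset.univ \ {last}) := by
  have efx1 : EFX Finset.univ u {last} := by
    intro j hj
    rw [hu, hu]
    have hjlast : j ≠ last := by simpa using hj
    have hl : last ∉ ((Finset.univ \ ({last} : Finset (Fin m))).erase j) := by simp
    rw [if_neg hl, if_pos (mem_singleton_self last)]
    have hcard : ((((Finset.univ \ ({last} : Finset (Fin m))).erase j)).erase last).card ≤ m := by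
      refine le_trans (card_le_univ _) ?_
      simp
    have hcard' : ((((Finset.univ \ ({last} : Finset (Fin m))).erase j)).erase last).card ≤ (m:ℝ) := by
      exact_mod_cast hcard
    simp only [erase_singleton, card_empty]
    push_cast
    linarith
  have efx2 : EFX Finset.univ u (Finset.univ \ {last}) := by
    intro j hj
    have hj' : j = last := by
      simpa [Finset.sdiff_sdiff_eq_self (subset_univ ({last} : Finset (Fin m)))] using hj
    rw [Finset.sdiff_sdiff_eq_self (subset_univ _), hj', erase_singleton, hu, hu]
    have hl : last ∉ Finset.univ \ ({last} : Finset (Fin m)) := by simp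
    rw [if_neg hl]
    simp
  intro A
  constructor
  · rintro ⟨h1, h2⟩
    by_cases hA : last ∈ A
    · exact Or.inl (efx_forward_key m last u hu A hA h2)
    · right
      have hB : last ∈ Finset.univ \ A := by simp [hA]
      have h1' : EFX Finset.univ u (Finset.univ \ (Finset.univ \ A)) := by
        rwa [Finset.sdiff_sdiff_eq_self (subset_univ A)]
      have hkey := efx_forward_key m last u hu (Finset.univ \ A) hB h1'
      rw [← hkey, Finset.sdiff_sdiff_eq_self (subset_univ A)]
  · rintro (rfl | rfl)
    · exact ⟨efx1, efx2⟩
    · refine ⟨efx2, ?_⟩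
      rwa [Finset.sdiff_sdiff_eq_self (subset_univ _)]
end

section
/- For two agents with arbitrary monotonic valuations over m items, the number of EF1 allocations is at least C(m, m/2) if m is even, and at least 2·C(m−1, (m−1)/2) if m is odd. -/
open Finset Classical

/-!
If `A` is not EF1 for a monotone valuation `u`, then `u A < u ((M \ A).erase j)` for every item
`j`. Hence two such bundles `A`, `B` leave remainders `M \ A`, `M \ B` sharing at least two items:
if they shared at most one item `j`, then `(M \ A).erase j ⊆ B` and `(M \ B).erase j ⊆ A`, and
`u A < u B < u A`. So for each agent the remainders of the bundles it rejects form a 2-intersecting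
family, and Katona's theorem bounds such a family on `m` points by `(2^m - c) / 2`, where `c` is
the claimed number. A union bound over the two agents leaves at least `c` EF1 allocations.

Katona's bound follows from his shadow theorem, `ℓ * #𝒜 ≤ (ℓ - 1) * #(∂ 𝒜)` for a 2-intersecting
`ℓ`-uniform family `𝒜`. It is proved by induction on the ground set: after shifting a point `p`
away as far as possible, the links of `p` are still 2-intersecting, and small ground sets are
covered by local LYM. The members of size above `m / 2` are disjoint from the complements of the
shadow of the smaller ones, and for odd `m` the shadow theorem also bounds the middle level.
-/

open scoped FinsetFamily

section Katona

theorem powersetCard_subset_powerset {α : Type*} {s : Finset α} {k : ℕ} :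
    s.powersetCard k ⊆ s.powerset := fun _ hA =>
  mem_powerset.2 (mem_powersetCard.1 hA).1

variable {α : Type*} [DecidableEq α] {s A B : Finset α} {𝒜 ℬ : Finset (Finset α)} {t ℓ : ℕ}
  {x p : α}

/-- Unlike `Set.IsIntersectingOf`, this includes the pairs `A = B`: members have at least `t`
elements. -/
def IsTIntersecting (t : ℕ) (𝒜 : Finset (Finset α)) : Prop :=
  ∀ A ∈ 𝒜, ∀ B ∈ 𝒜, t ≤ #(A ∩ B)

namespace IsTIntersecting

theorem mono (h : IsTIntersecting t 𝒜) (hℬ : ℬ ⊆ 𝒜) : IsTIntersecting t ℬ :=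
  fun A hA B hB => h A (hℬ hA) B (hℬ hB)

theorem le_card (h : IsTIntersecting t 𝒜) (hA : A ∈ 𝒜) : t ≤ #A := by
  simpa using h A hA A hA

end IsTIntersecting

theorem card_image_sdiff (h𝒜s : 𝒜 ⊆ s.powerset) : #(𝒜.image (s \ ·)) = #𝒜 :=
  card_image_of_injOn fun A hA B hB hAB => by
    rw [← Finset.sdiff_sdiff_eq_self (mem_powerset.1 (h𝒜s hA)),
      ← Finset.sdiff_sdiff_eq_self (mem_powerset.1 (h𝒜s hB))]
    exact congrArg (s \ ·) hAB

theorem image_sdiff_subset_powerset (s : Finset α) (𝒜 : Finset (Finset α)) :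
    𝒜.image (s \ ·) ⊆ s.powerset := fun _ hA => by
  obtain ⟨A, -, rfl⟩ := mem_image.1 hA
  exact mem_powerset.2 sdiff_subset

theorem shadow_subset_powerset (h𝒜s : 𝒜 ⊆ s.powerset) : ∂ 𝒜 ⊆ s.powerset := fun _ hT => by
  obtain ⟨A, hA, a, -, rfl⟩ := mem_shadow_iff.1 hT
  exact mem_powerset.2 ((erase_subset _ _).trans (mem_powerset.1 (h𝒜s hA)))

theorem memberSubfamily_subset_powerset_erase (h𝒜s : 𝒜 ⊆ s.powerset) (a : α) :
    𝒜.memberSubfamily a ⊆ (s.erase a).powerset := by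
  intro A hA
  rw [mem_memberSubfamily] at hA
  rw [mem_powerset, subset_erase]
  exact ⟨(subset_insert _ _).trans (mem_powerset.1 (h𝒜s hA.1)), hA.2⟩

theorem nonMemberSubfamily_subset_powerset_erase (h𝒜s : 𝒜 ⊆ s.powerset) (a : α) :
    𝒜.nonMemberSubfamily a ⊆ (s.erase a).powerset := by
  intro A hA
  rw [mem_nonMemberSubfamily] at hA
  rw [mem_powerset, subset_erase]
  exact ⟨mem_powerset.1 (h𝒜s hA.1), hA.2⟩

theorem Set.Sized.memberSubfamily (h𝒜ℓ : (𝒜 : Set (Finset α)).Sized ℓ) (a : α) :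
    ((𝒜.memberSubfamily a : Finset (Finset α)) : Set (Finset α)).Sized (ℓ - 1) := by
  intro A hA
  rw [mem_coe, mem_memberSubfamily] at hA
  have := h𝒜ℓ hA.1
  rw [card_insert_of_notMem hA.2] at this
  omega

theorem Set.Sized.nonMemberSubfamily (h𝒜ℓ : (𝒜 : Set (Finset α)).Sized ℓ) (a : α) :
    ((𝒜.nonMemberSubfamily a : Finset (Finset α)) : Set (Finset α)).Sized ℓ :=
  fun _ hA => h𝒜ℓ (mem_filter.1 hA).1

theorem card_shadow_memberSubfamily_add_card_shadow_nonMemberSubfamily_le (a : α)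
    (𝒜 : Finset (Finset α)) :
    #(∂ (𝒜.memberSubfamily a)) + #(∂ (𝒜.nonMemberSubfamily a)) ≤ #(∂ 𝒜) := by
  rw [← card_memberSubfamily_add_card_nonMemberSubfamily a (∂ 𝒜)]
  gcongr
  · intro T hT
    obtain ⟨b, hbT, hb⟩ := mem_shadow_iff_insert_mem.1 hT
    rw [mem_memberSubfamily] at hb ⊢
    have hab : a ≠ b := fun h => hb.2 (h ▸ mem_insert_self _ _)
    refine ⟨mem_shadow_iff_insert_mem.2 ⟨b, ?_, ?_⟩, fun h => hb.2 (mem_insert_of_mem h)⟩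
    · simpa [hab.symm] using hbT
    · rw [insert_comm]
      exact hb.1
  · intro T hT
    obtain ⟨A, hA, b, hb, rfl⟩ := mem_shadow_iff.1 hT
    rw [mem_nonMemberSubfamily] at hA ⊢
    exact ⟨erase_mem_shadow hA.1 hb, fun h => hA.2 (mem_of_mem_erase h)⟩

theorem card_mul_le_card_shadow_mul_of_subset_powerset (h𝒜s : 𝒜 ⊆ s.powerset)
    (h𝒜ℓ : (𝒜 : Set (Finset α)).Sized ℓ) : #𝒜 * ℓ ≤ #(∂ 𝒜) * (#s + 1 - ℓ) := by
  refine card_mul_le_card_mul' (· ⊆ ·) (fun A hA => ?_) (fun T hT => ?_)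
  · rw [← h𝒜ℓ hA, ← card_image_of_injOn A.erase_injOn]
    refine card_le_card ?_
    simp_rw [image_subset_iff, mem_bipartiteBelow]
    exact fun a ha => ⟨erase_mem_shadow hA ha, erase_subset _ _⟩
  · obtain ⟨A, hA, a, ha, rfl⟩ := mem_shadow_iff.1 hT
    have hT : #(A.erase a) + 1 = ℓ := by rw [card_erase_add_one ha, h𝒜ℓ hA]
    calc #(𝒜.bipartiteAbove (· ⊆ ·) (A.erase a))
        ≤ #((s \ A.erase a).image (insert · (A.erase a))) := by
          refine card_le_card fun C hC => ?_
          rw [mem_bipartiteAbove] at hC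
          obtain ⟨c, hc, rfl⟩ := exists_eq_insert_iff.2 ⟨hC.2, hT.trans (h𝒜ℓ hC.1).symm⟩
          exact mem_image_of_mem _
            (mem_sdiff.2 ⟨mem_powerset.1 (h𝒜s hC.1) (mem_insert_self _ _), hc⟩)
      _ ≤ #(s \ A.erase a) := card_image_le
      _ ≤ #s + 1 - ℓ := by
          rw [card_sdiff_of_subset ((erase_subset _ _).trans (mem_powerset.1 (h𝒜s hA)))]
          omega

theorem mul_card_le_mul_card_shadow_of_card_add_two_le (h𝒜s : 𝒜 ⊆ s.powerset)
    (h𝒜ℓ : (𝒜 : Set (Finset α)).Sized ℓ) (hs : #s + 2 ≤ 2 * ℓ) :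
    ℓ * #𝒜 ≤ (ℓ - 1) * #(∂ 𝒜) := by
  have := card_mul_le_card_shadow_mul_of_subset_powerset h𝒜s h𝒜ℓ
  have : #s + 1 - ℓ ≤ ℓ - 1 := by omega
  nlinarith

/-! ### Shifting a family away from a point -/

theorem UV.compress_singleton (x p : α) (A : Finset α) :
    UV.compress {x} {p} A = if p ∈ A ∧ x ∉ A then insert x (A.erase p) else A := by
  by_cases hA : p ∈ A ∧ x ∉ A
  · rw [if_pos hA, UV.compress_of_disjoint_of_le (disjoint_singleton_left.2 hA.2)
      (singleton_subset_iff.2 hA.1)]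
    ext y
    simp only [sup_eq_union, mem_sdiff, mem_union, mem_singleton, mem_insert, mem_erase]
    grind
  · rw [if_neg hA, UV.compress, if_neg]
    simpa [disjoint_singleton_left, and_comm] using hA

theorem card_insert_erase_inter_add (hp : p ∈ A) (hx : x ∉ A) (B : Finset α) :
    #(insert x (A.erase p) ∩ B) + (if p ∈ B then 1 else 0) =
      #(A ∩ B) + (if x ∈ B then 1 else 0) := by
  have key : #((A ∩ B).erase p) + (if p ∈ B then 1 else 0) = #(A ∩ B) := by
    split_ifs with hpB
    · exact card_erase_add_one (mem_inter.2 ⟨hp, hpB⟩)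
    · rw [erase_eq_of_notMem (fun h => hpB (mem_inter.1 h).2), add_zero]
  by_cases hxB : x ∈ B
  · rw [insert_inter_of_mem hxB, erase_inter, if_pos hxB,
      card_insert_of_notMem fun h => hx (mem_inter.1 (mem_of_mem_erase h)).1]
    omega
  · rw [insert_inter_of_notMem hxB, erase_inter, if_neg hxB]
    omega

theorem UV.mem_compression_singleton :
    A ∈ UV.compression {x} {p} 𝒜 ↔
      (A ∈ 𝒜 ∧ UV.compress {x} {p} A ∈ 𝒜) ∨
        ∃ B ∈ 𝒜, p ∈ B ∧ x ∉ B ∧ insert x (B.erase p) = A ∧ A ∉ 𝒜 := by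
  rw [UV.mem_compression]
  refine or_congr_right ⟨?_, ?_⟩
  · rintro ⟨hA, B, hB, rfl⟩
    rw [UV.compress_singleton] at hA ⊢
    split_ifs at hA ⊢ with hmove
    · exact ⟨B, hB, hmove.1, hmove.2, rfl, hA⟩
    · exact absurd hB hA
  · rintro ⟨B, hB, hp, hx, rfl, hA⟩
    exact ⟨hA, B, hB, by rw [UV.compress_singleton, if_pos ⟨hp, hx⟩]⟩

theorem IsTIntersecting.le_card_insert_erase_inter (h : IsTIntersecting t 𝒜) (hA : A ∈ 𝒜)
    (hp : p ∈ A) (hx : x ∉ A) (hB : B ∈ UV.compression {x} {p} 𝒜) :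
    t ≤ #(insert x (A.erase p) ∩ B) := by
  have hA' := card_insert_erase_inter_add hp hx
  rcases UV.mem_compression_singleton.1 hB with ⟨hB, hcB⟩ | ⟨B, hB₀, hpB, hxB, rfl, -⟩
  · by_cases hmove : p ∈ B ∧ x ∉ B
    · -- `B` was not moved because its shift is in `𝒜`, and that shift meets `A` as often as
      -- `insert x (A.erase p)` meets `B`
      obtain ⟨hpB, hxB⟩ := hmove
      rw [UV.compress_singleton, if_pos ⟨hpB, hxB⟩] at hcB
      have e₁ := hA' B
      have e₂ := card_insert_erase_inter_add hpB hxB A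
      rw [if_pos hpB, if_neg hxB] at e₁
      rw [if_pos hp, if_neg hx, inter_comm B A, inter_comm] at e₂
      have := h _ hA _ hcB
      omega
    · have e := hA' B
      have := h _ hA _ hB
      rcases not_and_or.1 hmove with hpB | hxB
      · rw [if_neg hpB] at e
        split_ifs at e <;> omega
      · rw [if_pos (not_not.1 hxB)] at e
        split_ifs at e <;> omega
  · have hpx : p ≠ x := fun h => hx (h ▸ hp)
    have hpB' : p ∉ insert x (B.erase p) := by simp [hpx]
    have e₁ := hA' (insert x (B.erase p))
    have e₂ := card_insert_erase_inter_add hpB hxB A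
    rw [if_neg hpB', if_pos (mem_insert_self _ _)] at e₁
    rw [if_pos hp, if_neg hx, inter_comm _ A, inter_comm B A] at e₂
    have := h _ hA _ hB₀
    omega

theorem IsTIntersecting.uvCompression (h : IsTIntersecting t 𝒜) (x p : α) :
    IsTIntersecting t (UV.compression {x} {p} 𝒜) := by
  intro A hA B hB
  rcases UV.mem_compression_singleton.1 hA with ⟨hA', -⟩ | ⟨A, hA', hpA, hxA, rfl, -⟩
  · rcases UV.mem_compression_singleton.1 hB with ⟨hB', -⟩ | ⟨B, hB', hpB, hxB, rfl, -⟩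
    · exact h A hA' B hB'
    · rw [inter_comm]
      exact h.le_card_insert_erase_inter hB' hpB hxB hA
  · exact h.le_card_insert_erase_inter hA' hpA hxA hB

theorem UV.compression_singleton_subset_powerset (hx : x ∈ s) (h𝒜 : 𝒜 ⊆ s.powerset) :
    UV.compression {x} {p} 𝒜 ⊆ s.powerset := by
  intro A hA
  rcases UV.mem_compression_singleton.1 hA with ⟨hA, -⟩ | ⟨B, hB, -, -, rfl, -⟩
  · exact h𝒜 hA
  · exact mem_powerset.2 (insert_subset hx ((erase_subset _ _).trans (mem_powerset.1 (h𝒜 hB))))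

theorem UV.card_filter_mem_compression_singleton_lt (h : ¬UV.IsCompressed {x} {p} 𝒜) :
    #{A ∈ UV.compression {x} {p} 𝒜 | p ∈ A} < #{A ∈ 𝒜 | p ∈ A} := by
  refine card_lt_card ((ssubset_iff_of_subset fun A hA => ?_).2 ?_)
  · rw [mem_filter] at hA ⊢
    rcases UV.mem_compression_singleton.1 hA.1 with ⟨hA', -⟩ | ⟨B, -, hpB, hxB, rfl, -⟩
    · exact ⟨hA', hA.2⟩
    · have hpx : p ≠ x := fun h => hxB (h ▸ hpB)
      simp [hpx] at hA
  · obtain ⟨A, hA, hAc⟩ : ∃ A ∈ 𝒜, A ∉ UV.compression {x} {p} 𝒜 := by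
      by_contra! hsub
      exact h (eq_of_subset_of_card_le hsub (UV.card_compression _ _ _).le).symm
    have hcA : UV.compress {x} {p} A ∉ 𝒜 := fun hcA =>
      hAc (UV.mem_compression.2 (Or.inl ⟨hA, hcA⟩))
    refine ⟨A, mem_filter.2 ⟨hA, ?_⟩, fun hA' => hAc (mem_filter.1 hA').1⟩
    by_contra hpA
    rw [UV.compress_singleton, if_neg fun h => hpA h.1] at hcA
    exact hcA hA

theorem exists_isCompressed_singleton (p : α) (h𝒜s : 𝒜 ⊆ s.powerset)
    (h𝒜ℓ : (𝒜 : Set (Finset α)).Sized ℓ) (h𝒜 : IsTIntersecting t 𝒜) :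
    ∃ ℬ ⊆ s.powerset, (ℬ : Set (Finset α)).Sized ℓ ∧ IsTIntersecting t ℬ ∧ #ℬ = #𝒜 ∧
      #(∂ ℬ) ≤ #(∂ 𝒜) ∧ ∀ x ∈ s, UV.IsCompressed {x} {p} ℬ := by
  induction hn : #{A ∈ 𝒜 | p ∈ A} using Nat.strong_induction_on generalizing 𝒜 with
  | _ n ih =>
  by_cases hc : ∀ x ∈ s, UV.IsCompressed {x} {p} 𝒜
  · exact ⟨𝒜, h𝒜s, h𝒜ℓ, h𝒜, rfl, le_rfl, hc⟩
  push Not at hc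
  obtain ⟨x, hx, hnc⟩ := hc
  obtain ⟨ℬ, hℬs, hℬℓ, hℬ, hcard, hshadow, hℬc⟩ :=
    ih _ (hn ▸ UV.card_filter_mem_compression_singleton_lt hnc)
      (UV.compression_singleton_subset_powerset (p := p) hx h𝒜s) (h𝒜ℓ.uvCompression rfl)
      (h𝒜.uvCompression x p) rfl
  refine ⟨ℬ, hℬs, hℬℓ, hℬ, hcard.trans (UV.card_compression _ _ _),
    hshadow.trans (UV.card_shadow_compression_le _ _ ?_), hℬc⟩
  simp [UV.isCompressed_self]

theorem IsTIntersecting.memberSubfamily_of_isCompressed (h : IsTIntersecting 2 𝒜)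
    (h𝒜ℓ : (𝒜 : Set (Finset α)).Sized ℓ) (hℓ : 2 * ℓ ≤ #s + 1)
    (hc : ∀ x ∈ s, UV.IsCompressed {x} {p} 𝒜) : IsTIntersecting 2 (𝒜.memberSubfamily p) := by
  intro A hA B hB
  rw [mem_memberSubfamily] at hA hB
  have hAB : #(insert p A ∩ insert p B) = #(A ∩ B) + 1 := by
    rw [← insert_inter_distrib, card_insert_of_notMem fun h => hA.2 (mem_inter.1 h).1]
  by_contra! hlt
  -- two members meeting in exactly two points leave room for a point `x` outside both, and
  -- shifting `p` to `x` in one of them produces a member meeting the other in one point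
  have hunion : #(insert p A ∪ insert p B) < #s := by
    have := card_union_add_card_inter (insert p A) (insert p B)
    rw [h𝒜ℓ hA.1, h𝒜ℓ hB.1] at this
    have := h _ hA.1 _ hB.1
    omega
  obtain ⟨x, hx, hxAB⟩ := exists_mem_notMem_of_card_lt_card hunion
  rw [mem_union, not_or] at hxAB
  have hshift := UV.compress_mem_compression (u := {x}) (v := {p}) hA.1
  rw [hc x hx, UV.compress_singleton, if_pos ⟨mem_insert_self _ _, hxAB.1⟩,
    erase_insert hA.2] at hshift
  have e := card_insert_erase_inter_add (mem_insert_self p A) hxAB.1 (insert p B)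
  rw [erase_insert hA.2, if_pos (mem_insert_self _ _), if_neg hxAB.2] at e
  have := h _ hshift _ hB.1
  omega

/-! ### Katona's theorem for 2-intersecting families -/

theorem IsTIntersecting.mul_card_le_mul_card_shadow (h : IsTIntersecting 2 𝒜)
    (h𝒜s : 𝒜 ⊆ s.powerset) (h𝒜ℓ : (𝒜 : Set (Finset α)).Sized ℓ) :
    ℓ * #𝒜 ≤ (ℓ - 1) * #(∂ 𝒜) := by
  induction s using Finset.strongInduction generalizing ℓ 𝒜 with
  | H s ih =>
  obtain rfl | ⟨A, hA⟩ := 𝒜.eq_empty_or_nonempty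
  · simp
  obtain ⟨k, rfl⟩ : ∃ k, ℓ = k + 2 := ⟨ℓ - 2, by have := h.le_card hA; rw [h𝒜ℓ hA] at this; omega⟩
  by_cases hsmall : #s + 2 ≤ 2 * (k + 2)
  · exact mul_card_le_mul_card_shadow_of_card_add_two_le h𝒜s h𝒜ℓ hsmall
  obtain ⟨p, hp⟩ : s.Nonempty := by
    by_contra! hs
    have := card_le_card (mem_powerset.1 (h𝒜s hA))
    rw [hs, card_empty, h𝒜ℓ hA] at this
    omega
  obtain ⟨ℬ, hℬs, hℬℓ, hℬ, hcard, hshadow, hℬc⟩ := exists_isCompressed_singleton p h𝒜s h𝒜ℓ h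
  have h₀ : (k + 2) * #(ℬ.nonMemberSubfamily p) ≤ (k + 1) * #(∂ (ℬ.nonMemberSubfamily p)) :=
    ih _ (erase_ssubset hp) (hℬ.mono (filter_subset _ _))
      (nonMemberSubfamily_subset_powerset_erase hℬs p) (hℬℓ.nonMemberSubfamily p)
  have h₁ : (k + 1) * #(ℬ.memberSubfamily p) ≤ k * #(∂ (ℬ.memberSubfamily p)) :=
    ih _ (erase_ssubset hp) (hℬ.memberSubfamily_of_isCompressed hℬℓ (by omega) hℬc)
      (memberSubfamily_subset_powerset_erase hℬs p) (hℬℓ.memberSubfamily p)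
  -- the ratio `(k + 1) / k` for the link is at least the ratio `(k + 2) / (k + 1)` needed here
  have h₁' : (k + 2) * #(ℬ.memberSubfamily p) ≤ (k + 1) * #(∂ (ℬ.memberSubfamily p)) := by
    refine Nat.le_of_mul_le_mul_left ?_ k.succ_pos
    calc (k + 1) * ((k + 2) * #(ℬ.memberSubfamily p))
        ≤ (k + 2) * (k * #(∂ (ℬ.memberSubfamily p))) := by nlinarith
      _ ≤ (k + 1) * ((k + 1) * #(∂ (ℬ.memberSubfamily p))) := by nlinarith
  calc (k + 2) * #𝒜
      = (k + 2) * #(ℬ.memberSubfamily p) + (k + 2) * #(ℬ.nonMemberSubfamily p) := by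
        rw [← hcard, ← card_memberSubfamily_add_card_nonMemberSubfamily p ℬ, mul_add]
    _ ≤ (k + 1) * (#(∂ (ℬ.memberSubfamily p)) + #(∂ (ℬ.nonMemberSubfamily p))) := by
        rw [mul_add]; exact add_le_add h₁' h₀
    _ ≤ (k + 2 - 1) * #(∂ 𝒜) := by
        rw [show k + 2 - 1 = k + 1 by omega]
        exact Nat.mul_le_mul_left _
          ((card_shadow_memberSubfamily_add_card_shadow_nonMemberSubfamily_le p ℬ).trans hshadow)

theorem IsTIntersecting.card_le_card_shadow (h : IsTIntersecting 2 𝒜) (h𝒜s : 𝒜 ⊆ s.powerset) :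
    #𝒜 ≤ #(∂ 𝒜) := by
  have hlevel : ∀ ℓ, #{A ∈ 𝒜 | #A = ℓ} ≤ #(∂ {A ∈ 𝒜 | #A = ℓ}) := by
    intro ℓ
    obtain h0 | ⟨A, hA⟩ := ({A ∈ 𝒜 | #A = ℓ} : Finset _).eq_empty_or_nonempty
    · simp [h0]
    rw [mem_filter] at hA
    have hℓ : 0 < ℓ := by have := h.le_card hA.1; omega
    refine Nat.le_of_mul_le_mul_left ?_ hℓ
    exact ((h.mono (filter_subset _ _)).mul_card_le_mul_card_shadow
      ((filter_subset _ _).trans h𝒜s) fun A hA => (mem_filter.1 hA).2).trans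
      (Nat.mul_le_mul_right _ (Nat.sub_le _ _))
  have hdisj : ((𝒜.image card : Finset ℕ) : Set ℕ).PairwiseDisjoint
      fun ℓ => ∂ {A ∈ 𝒜 | #A = ℓ} := by
    refine fun ℓ _ ℓ' _ hne => disjoint_left.2 fun T hT hT' => hne ?_
    obtain ⟨A, hA, -, hAT⟩ := mem_shadow_iff_exists_mem_card_add_one.1 hT
    obtain ⟨A', hA', -, hAT'⟩ := mem_shadow_iff_exists_mem_card_add_one.1 hT'
    rw [← (mem_filter.1 hA).2, ← (mem_filter.1 hA').2, hAT, hAT']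
  calc #𝒜 = ∑ ℓ ∈ 𝒜.image card, #{A ∈ 𝒜 | #A = ℓ} := card_eq_sum_card_image _ _
    _ ≤ ∑ ℓ ∈ 𝒜.image card, #(∂ {A ∈ 𝒜 | #A = ℓ}) := sum_le_sum fun ℓ _ => hlevel ℓ
    _ = #((𝒜.image card).biUnion fun ℓ => ∂ {A ∈ 𝒜 | #A = ℓ}) := (card_biUnion hdisj).symm
    _ ≤ #(∂ 𝒜) := card_le_card (biUnion_subset.2 fun ℓ _ => shadow_mono (filter_subset _ _))

theorem IsTIntersecting.disjoint_image_sdiff_shadow (h : IsTIntersecting 2 𝒜) (s : Finset α) :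
    Disjoint 𝒜 ((∂ 𝒜).image (s \ ·)) := by
  refine disjoint_right.2 fun C hC hC𝒜 => ?_
  obtain ⟨T, hT, rfl⟩ := mem_image.1 hC
  obtain ⟨B, hB, y, -, rfl⟩ := mem_shadow_iff.1 hT
  have hsub : (s \ B.erase y) ∩ B ⊆ {y} := fun z hz => by
    rw [mem_inter, mem_sdiff, mem_erase] at hz
    simpa using not_not.1 fun hzy => hz.1.2 ⟨hzy, hz.2⟩
  have := (h _ hC𝒜 _ hB).trans (card_le_card hsub)
  simp at this

theorem two_mul_card_add_card_le_two_pow {𝒳 𝒵 : Finset (Finset α)} {r : ℕ}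
    (h𝒳s : 𝒳 ⊆ s.powerset) (h𝒵s : 𝒵 ⊆ s.powerset) (h𝒳 : ∀ X ∈ 𝒳, r ≤ #X)
    (h𝒵 : ∀ Z ∈ 𝒵, #s < #Z + r ∧ #Z < r) (hr : #s < 2 * r) : 2 * #𝒳 + #𝒵 ≤ 2 ^ #s := by
  have hc : ∀ Y ∈ 𝒳.image (s \ ·), #Y + r ≤ #s := fun _ hY => by
    obtain ⟨X, hX, rfl⟩ := mem_image.1 hY
    have := h𝒳 X hX
    rw [card_sdiff_of_subset (mem_powerset.1 (h𝒳s hX))]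
    have := card_le_card (mem_powerset.1 (h𝒳s hX))
    omega
  have d₁ : Disjoint 𝒳 (𝒳.image (s \ ·)) := disjoint_left.2 fun X hX hX' => by
    have := h𝒳 X hX
    have := hc X hX'
    omega
  have d₂ : Disjoint (𝒳 ∪ 𝒳.image (s \ ·)) 𝒵 := disjoint_left.2 fun Z hZ hZ' => by
    have := h𝒵 Z hZ'
    rcases mem_union.1 hZ with hZ | hZ
    · have := h𝒳 Z hZ
      omega
    · have := hc Z hZ
      omega
  calc 2 * #𝒳 + #𝒵 = #(𝒳 ∪ 𝒳.image (s \ ·) ∪ 𝒵) := by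
        rw [card_union_of_disjoint d₂, card_union_of_disjoint d₁, card_image_sdiff h𝒳s]
        ring
    _ ≤ #s.powerset :=
        card_le_card (union_subset (union_subset h𝒳s (image_sdiff_subset_powerset s 𝒳)) h𝒵s)
    _ = 2 ^ #s := card_powerset s

theorem IsTIntersecting.two_mul_card_filter_add_card_le_two_pow {𝒵 : Finset (Finset α)} {r : ℕ}
    (h : IsTIntersecting 2 𝒜) (h𝒜s : 𝒜 ⊆ s.powerset) (h𝒵s : 𝒵 ⊆ s.powerset)
    (h𝒵 : ∀ Z ∈ 𝒵, #s < #Z + r ∧ #Z < r) (hr : #s < 2 * r) :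
    2 * (#{A ∈ 𝒜 | r ≤ #A} + #{A ∈ 𝒜 | #A + r ≤ #s + 1}) + #𝒵 ≤ 2 ^ #s := by
  set 𝒜ₗ := {A ∈ 𝒜 | #A + r ≤ #s + 1} with h𝒜ₗ
  -- large members of `𝒜` and complements of shadows of small ones are all large and distinct
  have hdisj : Disjoint {A ∈ 𝒜 | r ≤ #A} ((∂ 𝒜ₗ).image (s \ ·)) :=
    (h.disjoint_image_sdiff_shadow s).mono (filter_subset _ _)
      (image_subset_image (shadow_mono (filter_subset _ _)))
  have hsize : ∀ X ∈ {A ∈ 𝒜 | r ≤ #A} ∪ (∂ 𝒜ₗ).image (s \ ·), r ≤ #X := by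
    intro X hX
    rcases mem_union.1 hX with hX | hX
    · exact (mem_filter.1 hX).2
    obtain ⟨T, hT, rfl⟩ := mem_image.1 hX
    obtain ⟨A, hA, hTA, hAT⟩ := mem_shadow_iff_exists_mem_card_add_one.1 hT
    have := (mem_filter.1 hA).2
    have := card_le_card (mem_powerset.1 (h𝒜s (mem_filter.1 hA).1))
    rw [card_sdiff_of_subset (hTA.trans (mem_powerset.1 (h𝒜s (mem_filter.1 hA).1)))]
    omega
  have hℓ : #𝒜ₗ ≤ #(∂ 𝒜ₗ) :=
    (h.mono (filter_subset _ _)).card_le_card_shadow ((filter_subset _ _).trans h𝒜s)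
  have := two_mul_card_add_card_le_two_pow
    (union_subset ((filter_subset _ _).trans h𝒜s) (image_sdiff_subset_powerset s _)) h𝒵s hsize
    h𝒵 hr
  rw [card_union_of_disjoint hdisj,
    card_image_sdiff (shadow_subset_powerset ((filter_subset _ _).trans h𝒜s)), ← h𝒜ₗ] at this
  omega

theorem IsTIntersecting.card_le_choose_of_card_eq_two_mul_add_one {k : ℕ}
    (h : IsTIntersecting 2 𝒜) (h𝒜s : 𝒜 ⊆ s.powerset) (hs : #s = 2 * k + 1)
    (h𝒜k : (𝒜 : Set (Finset α)).Sized (k + 1)) : #𝒜 ≤ (2 * k).choose (k + 1) := by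
  have hsub : 𝒜 ∪ (∂ 𝒜).image (s \ ·) ⊆ s.powersetCard (k + 1) := by
    refine union_subset (fun A hA => mem_powersetCard.2 ⟨mem_powerset.1 (h𝒜s hA), h𝒜k hA⟩) ?_
    intro C hC
    obtain ⟨T, hT, rfl⟩ := mem_image.1 hC
    have hTs := mem_powerset.1 (shadow_subset_powerset h𝒜s hT)
    rw [mem_powersetCard, card_sdiff_of_subset hTs, h𝒜k.shadow hT, hs]
    exact ⟨sdiff_subset, by omega⟩
  have hpair := card_le_card hsub
  rw [card_union_of_disjoint (h.disjoint_image_sdiff_shadow s),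
    card_image_sdiff (shadow_subset_powerset h𝒜s), card_powersetCard, hs,
    Nat.choose_succ_succ'] at hpair
  have hratio := h.mul_card_le_mul_card_shadow h𝒜s h𝒜k
  rw [Nat.add_sub_cancel] at hratio
  have hc := Nat.choose_succ_right_eq (2 * k) k
  rw [show 2 * k - k = k by omega] at hc
  nlinarith

theorem IsTIntersecting.two_mul_card_add_choose_le_two_pow_of_card_eq_two_mul {k : ℕ}
    (h : IsTIntersecting 2 𝒜) (h𝒜s : 𝒜 ⊆ s.powerset) (hs : #s = 2 * k) :
    2 * #𝒜 + (2 * k).choose k ≤ 2 ^ #s := by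
  have := h.two_mul_card_filter_add_card_le_two_pow (r := k + 1) (𝒵 := s.powersetCard k) h𝒜s
    powersetCard_subset_powerset (fun Z hZ => by rw [(mem_powersetCard.1 hZ).2]; omega) (by omega)
  rw [card_powersetCard, hs] at this
  have hsplit := card_filter_add_card_filter_not (s := 𝒜) (k + 1 ≤ #·)
  rw [filter_congr fun A _ => show ¬k + 1 ≤ #A ↔ #A + (k + 1) ≤ #s + 1 by omega] at hsplit
  rw [hs] at hsplit ⊢
  omega

theorem IsTIntersecting.two_mul_card_add_choose_le_two_pow_of_card_eq_two_mul_add_one {k : ℕ}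
    (h : IsTIntersecting 2 𝒜) (h𝒜s : 𝒜 ⊆ s.powerset) (hs : #s = 2 * k + 1) :
    2 * #𝒜 + 2 * (2 * k).choose k ≤ 2 ^ #s := by
  have := h.two_mul_card_filter_add_card_le_two_pow (r := k + 2)
    (𝒵 := s.powersetCard k ∪ s.powersetCard (k + 1)) h𝒜s
    (union_subset powersetCard_subset_powerset powersetCard_subset_powerset)
    (fun Z hZ => by rcases mem_union.1 hZ with hZ | hZ <;> rw [(mem_powersetCard.1 hZ).2] <;> omega)
    (by omega)
  rw [card_union_of_disjoint (pairwise_disjoint_powersetCard s (by omega)), card_powersetCard,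
    card_powersetCard, hs, ← Nat.choose_symm_half, Nat.choose_succ_succ'] at this
  have hmid := (h.mono (filter_subset _ _)).card_le_choose_of_card_eq_two_mul_add_one
    ((filter_subset _ _).trans h𝒜s) hs (𝒜 := {A ∈ 𝒜 | #A = k + 1}) fun A hA => (mem_filter.1 hA).2
  have hcover : 𝒜 ⊆ {A ∈ 𝒜 | k + 2 ≤ #A} ∪ {A ∈ 𝒜 | #A + (k + 2) ≤ #s + 1} ∪
      {A ∈ 𝒜 | #A = k + 1} := fun A hA => by
    simp only [mem_union, mem_filter, hA, true_and]
    omega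
  have := (card_le_card hcover).trans
    ((card_union_le _ _).trans (Nat.add_le_add_right (card_union_le _ _) _))
  rw [hs] at this ⊢
  omega

theorem IsTIntersecting.two_mul_card_add_le_two_pow (h : IsTIntersecting 2 𝒜)
    (h𝒜s : 𝒜 ⊆ s.powerset) :
    2 * #𝒜 + (if Even #s then Nat.choose #s (#s / 2) else 2 * Nat.choose (#s - 1) ((#s - 1) / 2))
      ≤ 2 ^ #s := by
  obtain ⟨k, hk | hk⟩ := Nat.even_or_odd' #s
  · rw [if_pos ⟨k, by omega⟩, show #s / 2 = k by omega]
    simpa only [← hk] using h.two_mul_card_add_choose_le_two_pow_of_card_eq_two_mul h𝒜s hk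
  · rw [if_neg (Nat.not_even_iff_odd.2 ⟨k, hk⟩), show #s - 1 = 2 * k by omega,
      show 2 * k / 2 = k by omega]
    exact h.two_mul_card_add_choose_le_two_pow_of_card_eq_two_mul_add_one h𝒜s hk

end Katona

section EF1

variable {α : Type*} [DecidableEq α] {M A B : Finset α} {u : Finset α → ℝ}

theorem lt_of_not_EF1 (h : ¬EF1 M u A) (j : α) : u A < u ((M \ A).erase j) := by
  simp only [EF1, not_or, not_exists, not_and, not_le] at h
  by_cases hj : j ∈ M \ A
  · exact h.2 j hj
  · rw [erase_eq_of_notMem hj]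
    exact h.1

theorem two_le_card_sdiff_inter_sdiff_of_not_EF1 (hu : Monotone u) (hA : ¬EF1 M u A)
    (hB : ¬EF1 M u B) : 2 ≤ #((M \ A) ∩ (M \ B)) := by
  by_contra! hlt
  obtain ⟨a, -⟩ : (M \ A).Nonempty := by
    by_contra! h
    exact hA (Or.inl (by rw [h]; exact hu (empty_subset A)))
  have : Nonempty α := ⟨a⟩
  obtain ⟨j, hj⟩ := card_le_one_iff_subset_singleton.1 (Nat.le_of_lt_succ hlt)
  have hAB : (M \ A).erase j ⊆ B := fun z hz => by
    rw [mem_erase] at hz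
    by_contra hzB
    exact hz.1 (mem_singleton.1 (hj (mem_inter.2 ⟨hz.2, mem_sdiff.2 ⟨(mem_sdiff.1 hz.2).1, hzB⟩⟩)))
  have hBA : (M \ B).erase j ⊆ A := fun z hz => by
    rw [mem_erase] at hz
    by_contra hzA
    exact hz.1 (mem_singleton.1 (hj (mem_inter.2 ⟨mem_sdiff.2 ⟨(mem_sdiff.1 hz.2).1, hzA⟩, hz.2⟩)))
  linarith [lt_of_not_EF1 hA j, lt_of_not_EF1 hB j, hu hAB, hu hBA]

theorem card_filter_sdiff_powerset (M : Finset α) (P : Finset α → Prop) [DecidablePred P] :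
    #{A ∈ M.powerset | P (M \ A)} = #{A ∈ M.powerset | P A} := by
  have : {A ∈ M.powerset | P (M \ A)} = {A ∈ M.powerset | P A}.image (M \ ·) := by
    ext A
    simp only [mem_filter, mem_powerset, mem_image]
    constructor
    · exact fun hA => ⟨M \ A, ⟨sdiff_subset, hA.2⟩, Finset.sdiff_sdiff_eq_self hA.1⟩
    · rintro ⟨B, hB, rfl⟩
      exact ⟨sdiff_subset, by rw [Finset.sdiff_sdiff_eq_self hB.1]; exact hB.2⟩
  rw [this, card_image_sdiff (filter_subset _ _)]

theorem two_mul_card_filter_not_EF1_add_le (hu : Monotone u) :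
    2 * #{A ∈ M.powerset | ¬EF1 M u A} +
      (if Even #M then Nat.choose #M (#M / 2) else 2 * Nat.choose (#M - 1) ((#M - 1) / 2))
      ≤ 2 ^ #M := by
  rw [← card_filter_sdiff_powerset M (¬EF1 M u ·)]
  refine IsTIntersecting.two_mul_card_add_le_two_pow (fun A hA B hB => ?_) (filter_subset _ _)
  rw [mem_filter, mem_powerset] at hA hB
  have := two_le_card_sdiff_inter_sdiff_of_not_EF1 hu hA.2 hB.2
  rwa [Finset.sdiff_sdiff_eq_self hA.1, Finset.sdiff_sdiff_eq_self hB.1] at this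

end EF1

theorem EF1_allocations_count_general {α : Type*} [DecidableEq α] (M : Finset α)
    (u₁ u₂ : Finset α → ℝ)
    (hu₁m : ∀ A B : Finset α, A ⊆ B → u₁ A ≤ u₁ B)
    (hu₂m : ∀ A B : Finset α, A ⊆ B → u₂ A ≤ u₂ B) :
    (if Even M.card then Nat.choose M.card (M.card / 2)
      else 2 * Nat.choose (M.card - 1) ((M.card - 1) / 2)) ≤
      (M.powerset.filter fun A => EF1 M u₁ A ∧ EF1 M u₂ (M \ A)).card := by
  have h₁ := two_mul_card_filter_not_EF1_add_le (M := M) hu₁m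
  have h₂ := two_mul_card_filter_not_EF1_add_le (M := M) hu₂m
  rw [← card_filter_sdiff_powerset M (¬EF1 M u₂ ·)] at h₂
  have hcover : 2 ^ #M ≤ #{A ∈ M.powerset | EF1 M u₁ A ∧ EF1 M u₂ (M \ A)} +
      (#{A ∈ M.powerset | ¬EF1 M u₁ A} + #{A ∈ M.powerset | ¬EF1 M u₂ (M \ A)}) := by
    rw [← card_powerset, ← card_filter_add_card_filter_not (s := M.powerset)
      fun A => EF1 M u₁ A ∧ EF1 M u₂ (M \ A)]
    refine Nat.add_le_add_left ((card_le_card fun A hA => ?_).trans (card_union_le _ _)) _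
    rw [mem_filter, not_and_or] at hA
    rw [mem_union, mem_filter, mem_filter]
    tauto
  generalize (if Even #M then _ else _) = c at h₁ h₂ ⊢
  omega

/-- For two agents with arbitrary monotonic valuations on `m` items, the number of EF1
allocations is at least `C(m, m/2)` for even `m` and at least `2·C(m-1, (m-1)/2)` for
odd `m`. Allocations are identified with the bundle `A ⊆ M` given to agent 1. -/
theorem EF1_allocations_count {α : Type*} [DecidableEq α] (M : Finset α)
    (u₁ u₂ : Finset α → ℝ) (hu₁0 : u₁ ∅ = 0) (hu₂0 : u₂ ∅ = 0)
    (hu₁m : ∀ A B : Finset α, A ⊆ B → u₁ A ≤ u₁ B)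
    (hu₂m : ∀ A B : Finset α, A ⊆ B → u₂ A ≤ u₂ B) :
    (if Even M.card then Nat.choose M.card (M.card / 2)
      else 2 * Nat.choose (M.card - 1) ((M.card - 1) / 2)) ≤
      (M.powerset.filter fun A => EF1 M u₁ A ∧ EF1 M u₂ (M \ A)).card :=
  EF1_allocations_count_general M u₁ u₂ hu₁m hu₂m
end

section
/- Let m be odd, and let both agents have identical additive valuations assigning value 1 to each of the first m−1 items and value 0 to the last item. Then an allocation (M₁, M₂) is EF1 if and only if |M₁ ∩ {1,...,m−1}| = (m−1)/2; hence the number of EF1 allocations is exactly 2·C(m−1, (m−1)/2). -/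
open Finset Classical

/-- For odd `m` and identical additive valuations giving value `1` to each of the first
`m - 1` items and `0` to the last item, an allocation is EF1 iff agent 1 gets exactly
`(m-1)/2` of the first `m - 1` items; hence there are exactly `2·C(m-1, (m-1)/2)` EF1
allocations. -/
theorem EF1_allocations_one_null_item (m : ℕ) (hm : Odd m) (last : Fin m)
    (hlast : (last : ℕ) = m - 1) (u : Finset (Fin m) → ℝ)
    (hu : ∀ S : Finset (Fin m), u S = ((S.erase last).card : ℝ)) :
    (∀ A : Finset (Fin m),
        (EF1 Finset.univ u A ∧ EF1 Finset.univ u (Finset.univ \ A)) ↔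
          (A.erase last).card = (m - 1) / 2) ∧
      ((Finset.univ : Finset (Finset (Fin m))).filter
          (fun A => EF1 Finset.univ u A ∧ EF1 Finset.univ u (Finset.univ \ A))).card =
        2 * Nat.choose (m - 1) ((m - 1) / 2) := by
  have hm1 : 1 ≤ m := hm.pos
  obtain ⟨r, hr⟩ := hm
  set t : ℕ := (m - 1) / 2 with htdef
  have ht : m - 1 = 2 * t := by omega
  have hcard_univ_erase : ((Finset.univ : Finset (Fin m)).erase last).card = 2 * t := by
    rw [Finset.card_erase_of_mem (Finset.mem_univ _), Finset.card_univ, Fintype.card_fin]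
    omega
  have hsubE : ∀ A : Finset (Fin m), A.erase last ⊆ (Finset.univ : Finset (Fin m)).erase last :=
    fun A => Finset.erase_subset_erase _ (Finset.subset_univ A)
  have hk_le : ∀ A : Finset (Fin m), (A.erase last).card ≤ 2 * t := fun A => by
    rw [← hcard_univ_erase]; exact Finset.card_le_card (hsubE A)
  have hcompl : ∀ A : Finset (Fin m),
      ((Finset.univ \ A).erase last) = ((Finset.univ : Finset (Fin m)).erase last) \ (A.erase last) := by
    intro A; ext x; simp only [Finset.mem_erase, Finset.mem_sdiff, Finset.mem_univ, true_and]
    tauto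
  have hcardcompl : ∀ A : Finset (Fin m),
      ((Finset.univ \ A).erase last).card = 2 * t - (A.erase last).card := fun A => by
    rw [hcompl, Finset.card_sdiff_of_subset (hsubE A), hcard_univ_erase]
  have key : ∀ A : Finset (Fin m), EF1 Finset.univ u A ↔ t ≤ (A.erase last).card := by
    intro A
    have hkle := hk_le A
    constructor
    · rintro (h | ⟨j, hj, h⟩)
      · rw [hu, hu, hcardcompl] at h
        have := Nat.cast_le.mp h
        omega
      · rw [hu, hu] at h
        have h2 : ((Finset.univ \ A).erase last).card - 1
            ≤ (((Finset.univ \ A).erase j).erase last).card := by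
          rw [Finset.erase_right_comm]
          exact Finset.pred_card_le_card_erase
        have h3 := Nat.cast_le.mp h
        rw [hcardcompl] at h2
        omega
    · intro h
      left
      rw [hu, hu, hcardcompl]
      exact_mod_cast (by omega : 2 * t - (A.erase last).card ≤ (A.erase last).card)
  have hiff : ∀ A : Finset (Fin m),
      (EF1 Finset.univ u A ∧ EF1 Finset.univ u (Finset.univ \ A)) ↔
        (A.erase last).card = (m - 1) / 2 := by
    intro A
    rw [key A, key (Finset.univ \ A), hcardcompl A]
    have hkle := hk_le A
    omega
  refine ⟨hiff, ?_⟩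
  have hfilt : ((Finset.univ : Finset (Finset (Fin m))).filter
      (fun A => EF1 Finset.univ u A ∧ EF1 Finset.univ u (Finset.univ \ A)))
      = (Finset.univ : Finset (Finset (Fin m))).filter (fun A => (A.erase last).card = t) := by
    apply Finset.filter_congr
    intro A _
    rw [hiff A]
  rw [hfilt]
  have hbij : ((Finset.univ : Finset (Finset (Fin m))).filter
      (fun A => (A.erase last).card = t)).card
      = ((Finset.univ : Finset Bool) ×ˢ
          (((Finset.univ : Finset (Fin m)).erase last).powersetCard t)).card := by
    refine Finset.card_bij' (fun A _ => (decide (last ∈ A), A.erase last))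
      (fun p _ => if p.1 then insert last p.2 else p.2) ?hi ?hj ?li ?ri
    case hi =>
      intro A hA
      simp only [Finset.mem_filter, Finset.mem_univ, true_and] at hA
      simp only [Finset.mem_product, Finset.mem_univ, true_and, Finset.mem_powersetCard]
      exact ⟨hsubE A, hA⟩
    case hj =>
      intro p hp
      simp only [Finset.mem_product, Finset.mem_univ, true_and, Finset.mem_powersetCard] at hp
      obtain ⟨hsub, hcard⟩ := hp
      have hlastnot : last ∉ p.2 := fun h => (Finset.mem_erase.mp (hsub h)).1 rfl
      simp only [Finset.mem_filter, Finset.mem_univ, true_and]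
      by_cases hb : p.1
      · rw [if_pos hb, Finset.erase_insert hlastnot, hcard]
      · rw [if_neg hb, Finset.erase_eq_of_notMem hlastnot, hcard]
    case li =>
      intro A hA
      by_cases h : last ∈ A
      · simp [h, Finset.insert_erase h]
      · simp [h, Finset.erase_eq_of_notMem h]
    case ri =>
      intro p hp
      simp only [Finset.mem_product, Finset.mem_univ, true_and, Finset.mem_powersetCard] at hp
      obtain ⟨hsub, hcard⟩ := hp
      have hlastnot : last ∉ p.2 := fun h => (Finset.mem_erase.mp (hsub h)).1 rfl
      by_cases hb : p.1
      · simp only [if_pos hb]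
        rw [Finset.erase_insert hlastnot]
        refine Prod.ext ?_ rfl
        simp [hb]
      · simp only [if_neg hb]
        have hb' : p.1 = false := by simpa using hb
        rw [Finset.erase_eq_of_notMem hlastnot]
        refine Prod.ext ?_ rfl
        simp [hb', hlastnot]
  rw [hbij, Finset.card_product, Finset.card_powersetCard, hcard_univ_erase,
    Finset.card_univ, Fintype.card_bool, ht]
end

section
/- Let u be a monotonic valuation on subsets of a finite set M. Call a bundle A 'too small' if A is not EF1 for u but M \ A is EF1 for u. If A is too small and j ∈ M \ A, then A ∪ {j} is not 'too large' (where B is too large if B is EF1 but M \ B is not). Consequently, the Hamming distance between any too-small bundle and any too-large bundle is at least 2. -/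
/-! For monotone `u`, EF1 is upward closed in the bundle, so a too-large bundle `B` cannot lie
inside a too-small `A`; at distance `≤ 1` this forces `B = A ∪ {j}`. But `A` not EF1 gives
`u A < u ((M \ A).erase j) = u (M \ B)`, i.e. `M \ B` is EF1 once `j` is removed from `B`. -/

open Finset

/-- Bundle `A` is "too small": not EF1, but its complement is EF1. -/
def TooSmall {α : Type*} [DecidableEq α] (M : Finset α) (u : Finset α → ℝ) (A : Finset α) :
    Prop :=
  ¬ EF1 M u A ∧ EF1 M u (M \ A)

/-- Bundle `A` is "too large": EF1, but its complement is not EF1. -/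
def TooLarge {α : Type*} [DecidableEq α] (M : Finset α) (u : Finset α → ℝ) (A : Finset α) :
    Prop :=
  EF1 M u A ∧ ¬ EF1 M u (M \ A)

section

variable {α : Type*} [DecidableEq α] {M A B : Finset α} {u : Finset α → ℝ}

theorem EF1.mono (hu : Monotone u) (hBA : B ⊆ A) (hB : EF1 M u B) : EF1 M u A := by
  have hcompl : M \ A ⊆ M \ B := sdiff_subset_sdiff subset_rfl hBA
  have huA : u B ≤ u A := hu hBA
  rcases hB with hB | ⟨k, hk, hkB⟩
  · exact .inl ((hu hcompl).trans (hB.trans huA))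
  · by_cases hkA : k ∈ M \ A
    · exact .inr ⟨k, hkA, (hu (erase_subset_erase k hcompl)).trans (hkB.trans huA)⟩
    · -- `k` was handed over to `A`, so dropping it from `M \ B` already leaves `M \ A` inside
      have : M \ A ⊆ (M \ B).erase k := fun x hx =>
        mem_erase.2 ⟨fun hxk => hkA (hxk ▸ hx), hcompl hx⟩
      exact .inl ((hu this).trans (hkB.trans huA))

theorem ef1_sdiff_union_singleton_of_not_ef1 (hA : A ⊆ M) {j : α} (hj : j ∈ M \ A)
    (h : ¬ EF1 M u A) : EF1 M u (M \ (A ∪ {j})) := by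
  obtain ⟨hjM, hjA⟩ := mem_sdiff.1 hj
  have hcompl : M \ (M \ (A ∪ {j})) = A ∪ {j} :=
    Finset.sdiff_sdiff_eq_self (union_subset hA (singleton_subset_iff.2 hjM))
  have herase : (A ∪ {j}).erase j = A := by
    rw [union_comm, ← insert_eq, erase_insert hjA]
  have hrest : M \ (A ∪ {j}) = (M \ A).erase j := by
    rw [union_comm, ← insert_eq, sdiff_insert]
  simp only [EF1, not_or, not_exists, not_and, not_le] at h
  rw [EF1, hcompl, hrest]
  exact .inr ⟨j, mem_union_right _ (mem_singleton_self j), by rw [herase]; exact (h.2 j hj).le⟩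

theorem TooSmall.not_tooLarge_union_singleton (hA : A ⊆ M) {j : α} (hj : j ∈ M \ A)
    (hS : TooSmall M u A) : ¬ TooLarge M u (A ∪ {j}) :=
  fun hL => hL.2 (ef1_sdiff_union_singleton_of_not_ef1 hA hj hS.1)

theorem eq_union_singleton_of_card_symmDiff_le_one (h : ((A \ B) ∪ (B \ A)).card ≤ 1)
    {j : α} (hjB : j ∈ B) (hjA : j ∉ A) : B = A ∪ {j} := by
  have hj : j ∈ (A \ B) ∪ (B \ A) := mem_union_right _ (mem_sdiff.2 ⟨hjB, hjA⟩)
  ext x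
  simp only [mem_union, mem_singleton]
  constructor
  · intro hxB
    by_cases hxA : x ∈ A
    · exact .inl hxA
    · exact .inr (card_le_one.1 h x (mem_union_right _ (mem_sdiff.2 ⟨hxB, hxA⟩)) j hj)
  · rintro (hxA | rfl)
    · by_contra hxB
      have := card_le_one.1 h x (mem_union_left _ (mem_sdiff.2 ⟨hxA, hxB⟩)) j hj
      exact hjA (this ▸ hxA)
    · exact hjB

end

theorem tooSmall_tooLarge_dist_general {α : Type*} [DecidableEq α] (M : Finset α)
    (u : Finset α → ℝ)
    (hum : ∀ A B : Finset α, A ⊆ B → u A ≤ u B) :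
    (∀ A ⊆ M, ∀ j ∈ M \ A, TooSmall M u A → ¬ TooLarge M u (A ∪ {j})) ∧
      (∀ A ⊆ M, ∀ B ⊆ M, TooSmall M u A → TooLarge M u B →
        2 ≤ ((A \ B) ∪ (B \ A)).card) := by
  have hmono : Monotone u := fun A B hAB => hum A B hAB
  refine ⟨fun A hA j hj hS => hS.not_tooLarge_union_singleton hA hj, ?_⟩
  intro A hA B hB hS hL
  by_contra! hcard
  have hBA : ¬ B ⊆ A := fun hBA => hS.1 (hL.1.mono hmono hBA)
  obtain ⟨j, hjB, hjA⟩ := not_subset.1 hBA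
  have hBj : B = A ∪ {j} := eq_union_singleton_of_card_symmDiff_le_one (by omega) hjB hjA
  exact hS.not_tooLarge_union_singleton hA (mem_sdiff.2 ⟨hB hjB, hjA⟩) (hBj ▸ hL)

/-- Adding one item to a too-small bundle cannot make it too large; consequently, the Hamming
distance between any too-small bundle and any too-large bundle is at least `2`. -/
theorem tooSmall_tooLarge_dist {α : Type*} [DecidableEq α] (M : Finset α)
    (u : Finset α → ℝ) (hu0 : u ∅ = 0)
    (hum : ∀ A B : Finset α, A ⊆ B → u A ≤ u B) :
    (∀ A ⊆ M, ∀ j ∈ M \ A, TooSmall M u A → ¬ TooLarge M u (A ∪ {j})) ∧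
      (∀ A ⊆ M, ∀ B ⊆ M, TooSmall M u A → TooLarge M u B →
        2 ≤ ((A \ B) ∪ (B \ A)).card) :=
  tooSmall_tooLarge_dist_general M u hum
end

section
/- Let u be a monotonic valuation on subsets of M. If a bundle A is 'too small' (A is not EF1 for u but M \ A is) and j ∈ A, then A \ {j} is also too small. Dually, if B is 'too large' (B is EF1 but M \ B is not) and j ∈ M \ B, then B ∪ {j} is also too large. -/
open Finset

/-- Removing an item from a too-small bundle keeps it too small; adding an item to a
too-large bundle keeps it too large. -/
theorem tooSmall_tooLarge_monotone {α : Type*} [DecidableEq α] (M : Finset α)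
    (u : Finset α → ℝ) (hu0 : u ∅ = 0)
    (hum : ∀ A B : Finset α, A ⊆ B → u A ≤ u B) :
    (∀ A ⊆ M, ∀ j ∈ A, TooSmall M u A → TooSmall M u (A.erase j)) ∧
      (∀ B ⊆ M, ∀ j ∈ M \ B, TooLarge M u B → TooLarge M u (B ∪ {j})) := by
  constructor
  · rintro A hA j hj ⟨hnA, _⟩
    have hjM : j ∈ M := hA hj
    rw [EF1, not_or, not_le] at hnA
    obtain ⟨h1, h2⟩ := hnA
    push_neg at h2
    have e1 : M \ A.erase j = insert j (M \ A) := by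
      ext x
      have hx : x ∈ A → x ∈ M := fun h => hA h
      have hxM : x = j → x ∈ M := fun h => h ▸ hjM
      simp only [mem_sdiff, mem_erase, mem_insert]
      tauto
    have e2 : M \ insert j (M \ A) = A.erase j := by
      ext x
      have hx : x ∈ A → x ∈ M := fun h => hA h
      simp only [mem_sdiff, mem_insert, mem_erase]
      tauto
    have hle : u (A.erase j) ≤ u A := hum _ _ (erase_subset _ _)
    refine ⟨?_, ?_⟩
    · rw [EF1, not_or, not_le, e1]
      refine ⟨lt_of_le_of_lt hle (lt_of_lt_of_le h1 (hum _ _ (subset_insert _ _))), ?_⟩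
      push_neg
      intro k hk
      by_cases hkj : k = j
      · subst hkj
        rw [erase_insert (by simp [hj])]
        exact lt_of_le_of_lt hle h1
      · have hkMA : k ∈ M \ A := (mem_insert.1 hk).resolve_left hkj
        have hsub : (M \ A).erase k ⊆ (insert j (M \ A)).erase k :=
          erase_subset_erase _ (subset_insert _ _)
        exact lt_of_le_of_lt hle (lt_of_lt_of_le (h2 k hkMA) (hum _ _ hsub))
    · rw [EF1, e1, e2]
      exact Or.inl (le_trans hle (le_trans h1.le (hum _ _ (subset_insert _ _))))
  · rintro B hB j hj ⟨_, hnC⟩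
    have hjM : j ∈ M := (mem_sdiff.1 hj).1
    have hjB : j ∉ B := (mem_sdiff.1 hj).2
    rw [EF1, not_or, not_le] at hnC
    obtain ⟨h1, h2⟩ := hnC
    push_neg at h2
    have eB : M \ (M \ B) = B := Finset.sdiff_sdiff_eq_self hB
    rw [eB] at h1 h2
    have e3 : M \ (B ∪ {j}) = (M \ B).erase j := by
      ext x
      simp only [mem_sdiff, mem_union, mem_singleton, mem_erase, not_or]
      tauto
    have e4 : M \ ((M \ B).erase j) = B ∪ {j} := by
      ext x
      have hx : x ∈ B → x ∈ M := fun h => hB h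
      have hxM : x = j → x ∈ M := fun h => h ▸ hjM
      simp only [mem_sdiff, mem_erase, mem_union, mem_singleton]
      tauto
    have hCle : u ((M \ B).erase j) ≤ u (M \ B) := hum _ _ (erase_subset _ _)
    refine ⟨?_, ?_⟩
    · rw [EF1, e3]
      exact Or.inl (le_trans hCle (le_trans h1.le (hum _ _ subset_union_left)))
    · rw [EF1, not_or, not_le, e3, e4]
      refine ⟨lt_of_le_of_lt hCle (lt_of_lt_of_le h1 (hum _ _ subset_union_left)), ?_⟩
      push_neg
      intro k hk
      rcases mem_union.1 hk with hkB | hkj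
      · have hsub : B.erase k ⊆ (B ∪ {j}).erase k :=
          erase_subset_erase _ subset_union_left
        exact lt_of_le_of_lt hCle (lt_of_lt_of_le (h2 k hkB) (hum _ _ hsub))
      · have hkj : k = j := mem_singleton.1 hkj
        subst hkj
        have hBe : (B ∪ {k}).erase k = B := by
          rw [union_comm, ← insert_eq, erase_insert hjB]
        rw [hBe]
        exact lt_of_le_of_lt hCle h1
end

section
/- For fixed k ≥ 1, the shadow function ∂_{k−1} : ℕ → ℕ defined via the cascade (k-binomial) representation is non-decreasing: if n₁ > n₂ ≥ 1 then ∂_{k−1}(n₁) ≥ ∂_{k−1}(n₂). -/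
open Finset

/-- The value `C(a_k, k) + C(a_{k-1}, k-1) + ⋯ + C(a_i, i)` of a cascade representation,
where `l = [a_k, a_{k-1}, …, a_i]`. -/
def cascadeSum (k : ℕ) (l : List ℕ) : ℕ :=
  ∑ j ∈ Finset.range l.length, Nat.choose (l.getD j 0) (k - j)

/-- The shadow value `C(a_k, k-1) + C(a_{k-1}, k-2) + ⋯ + C(a_i, i-1)` of a cascade
representation `l = [a_k, a_{k-1}, …, a_i]`. -/
def shadowSum (k : ℕ) (l : List ℕ) : ℕ :=
  ∑ j ∈ Finset.range l.length, Nat.choose (l.getD j 0) (k - j - 1)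

/-- `l = [a_k, a_{k-1}, …, a_i]` is the cascade (`k`-binomial) representation of `n`:
`a_k > a_{k-1} > ⋯ > a_i ≥ i ≥ 1` and `n = C(a_k, k) + ⋯ + C(a_i, i)`. -/
def IsCascadeRep (k n : ℕ) (l : List ℕ) : Prop :=
  l ≠ [] ∧ l.Chain' (· > ·) ∧ l.length ≤ k ∧ k - l.length + 1 ≤ l.getLastD 0 ∧
    n = cascadeSum k l

/-!
Write `l₁ = a₁ :: t₁` and `l₂ = a₂ :: t₂`. A cascade of level `k` headed by `a` sums to less than
`C(a + 1, k)`, and its shadow is at most `C(a + 1, k - 1)` (Pascal's rule and induction). Hence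
`n₂ < n₁` forces `a₂ ≤ a₁`. If `a₂ < a₁`, then `∂n₂ ≤ C(a₂ + 1, k - 1) ≤ C(a₁, k - 1) ≤ ∂n₁`; if the
heads agree, they cancel and the tails, cascades of level `k - 1`, are compared by induction on `k`.
-/

lemma cascadeSum_nil (k : ℕ) : cascadeSum k [] = 0 := rfl

lemma cascadeSum_cons (k a : ℕ) (t : List ℕ) :
    cascadeSum k (a :: t) = a.choose k + cascadeSum (k - 1) t := by
  rw [cascadeSum, List.length_cons, sum_range_succ', add_comm]
  simp only [List.getD_cons_succ, List.getD_cons_zero, Nat.sub_zero, cascadeSum]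
  congr 1
  exact sum_congr rfl fun j _ ↦ by rw [Nat.sub_sub, Nat.add_comm 1 j]

lemma shadowSum_eq_cascadeSum (k : ℕ) (l : List ℕ) : shadowSum k l = cascadeSum (k - 1) l := by
  simp only [shadowSum, cascadeSum, Nat.sub_right_comm k]

/-- Unlike `IsCascadeRep`, this admits the empty list (representing `0`), so that the tail of a
cascade of level `k + 1` is a cascade of level `k`. -/
inductive IsCascade : ℕ → List ℕ → Prop
  | nil (k : ℕ) : IsCascade k []
  | cons {k a : ℕ} {t : List ℕ} :
      k + 1 ≤ a → (∀ b ∈ t.head?, b < a) → IsCascade k t → IsCascade (k + 1) (a :: t)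

namespace IsCascade

lemma le_head {k a : ℕ} {t : List ℕ} (h : IsCascade k (a :: t)) : k ≤ a := by
  cases h; assumption

lemma cascadeSum_lt_choose_succ {k a : ℕ} {t : List ℕ} (h : IsCascade k (a :: t)) :
    cascadeSum k (a :: t) < (a + 1).choose k := by
  induction t generalizing k a with
  | nil =>
    obtain _ | ⟨hka, -, -⟩ := h
    rw [cascadeSum_cons, cascadeSum_nil, Nat.choose_succ_succ']
    have := Nat.choose_pos (Nat.le_of_succ_le hka)
    omega
  | cons b s ih =>
    obtain _ | ⟨-, hba, hbs⟩ := h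
    have hba : b + 1 ≤ _ := hba b rfl
    have := (ih hbs).trans_le (Nat.choose_le_choose _ hba)
    rw [cascadeSum_cons, Nat.choose_succ_succ', Nat.add_sub_cancel]
    omega

lemma cascadeSum_pred_le_choose_succ {k a : ℕ} {t : List ℕ} (h : IsCascade k (a :: t)) :
    cascadeSum (k - 1) (a :: t) ≤ (a + 1).choose (k - 1) := by
  induction t generalizing k a with
  | nil => simpa [cascadeSum_cons, cascadeSum_nil] using Nat.choose_le_succ a (k - 1)
  | cons b s ih =>
    obtain _ | ⟨-, hba, hbs⟩ := h
    have hba : b + 1 ≤ _ := hba b rfl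
    have := (ih hbs).trans (Nat.choose_le_choose _ hba)
    cases hbs
    simp only [Nat.add_sub_cancel] at this ⊢
    rw [cascadeSum_cons, Nat.choose_succ_succ', Nat.add_sub_cancel]
    omega

lemma cascadeSum_pred_le_of_lt {k : ℕ} {l₁ l₂ : List ℕ} (h₁ : IsCascade k l₁)
    (h₂ : IsCascade k l₂) (hlt : cascadeSum k l₂ < cascadeSum k l₁) :
    cascadeSum (k - 1) l₂ ≤ cascadeSum (k - 1) l₁ := by
  induction h₁ generalizing l₂ with
  | nil => simp [cascadeSum_nil] at hlt
  | @cons k a₁ t₁ hka₁ hhead₁ ht₁ ih =>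
    obtain _ | @⟨_, a₂, t₂, hka₂, hhead₂, ht₂⟩ := h₂
    · simp [cascadeSum_nil]
    rw [Nat.add_sub_cancel]
    rcases lt_trichotomy a₁ a₂ with ha | rfl | ha
    · have := (cascadeSum_lt_choose_succ (.cons hka₁ hhead₁ ht₁)).trans_le
        (Nat.choose_le_choose (k + 1) ha)
      rw [cascadeSum_cons] at hlt
      omega
    · rw [cascadeSum_cons, cascadeSum_cons, Nat.add_sub_cancel] at hlt
      rw [cascadeSum_cons, cascadeSum_cons]
      have := ih ht₂ (by omega)
      omega
    · have := (cascadeSum_pred_le_choose_succ (.cons hka₂ hhead₂ ht₂)).trans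
        (Nat.choose_le_choose k ha)
      rw [Nat.add_sub_cancel] at this
      rw [cascadeSum_cons k a₁]
      omega

end IsCascade

lemma IsCascadeRep.isCascade {k n : ℕ} {l : List ℕ} (h : IsCascadeRep k n l) : IsCascade k l := by
  obtain ⟨hne, hchain, hlen, hlast, -⟩ := h
  induction l generalizing k with
  | nil => exact absurd rfl hne
  | cons a t ih =>
    obtain _ | k := k
    · simp at hlen
    cases t with
    | nil =>
      exact .cons (by simpa using hlast) (by simp) (.nil k)
    | cons b s =>
      simp only [List.Chain', List.isChain_cons_cons] at hchain
      have hbs : IsCascade k (b :: s) :=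
        ih (by simp) hchain.2 (by simpa using hlen) (by simpa using hlast)
      exact .cons (by have := hbs.le_head; omega) (by simpa using hchain.1) hbs

theorem shadow_monotone_general (k n₁ n₂ : ℕ) (hlt : n₂ < n₁)
    (l₁ l₂ : List ℕ) (h₁ : IsCascadeRep k n₁ l₁) (h₂ : IsCascadeRep k n₂ l₂) :
    shadowSum k l₂ ≤ shadowSum k l₁ := by
  rw [shadowSum_eq_cascadeSum, shadowSum_eq_cascadeSum]
  rw [h₁.2.2.2.2, h₂.2.2.2.2] at hlt
  exact h₁.isCascade.cascadeSum_pred_le_of_lt h₂.isCascade hlt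

/-- The shadow function `∂_{k-1}` defined via cascade representations is non-decreasing. -/
theorem shadow_monotone (k n₁ n₂ : ℕ) (hk : 1 ≤ k) (hn₂ : 1 ≤ n₂) (hlt : n₂ < n₁)
    (l₁ l₂ : List ℕ) (h₁ : IsCascadeRep k n₁ l₁) (h₂ : IsCascadeRep k n₂ l₂) :
    shadowSum k l₂ ≤ shadowSum k l₁ :=
  shadow_monotone_general k n₁ n₂ hlt l₁ l₂ h₁ h₂
end

section
/- Let X be a finite set with |X| = m even, and suppose 𝒜₀ is a Hamming ball with center X, ℬ₀ is a Hamming ball with center ∅, |𝒜₀| = |ℬ₀|, and d(𝒜₀, ℬ₀) ≥ 2. Then no subset of X of size m/2 belongs to 𝒜₀ ∪ ℬ₀; consequently |2^X \ (𝒜₀ ∪ ℬ₀)| ≥ C(m, m/2). -/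
open Finset

/-- Hamming distance between two finsets: size of the symmetric difference. -/
def hdist {α : Type*} [DecidableEq α] (A B : Finset α) : ℕ :=
  ((A \ B) ∪ (B \ A)).card

/-- Hamming distance between two set systems: the minimum over pairs. -/
noncomputable def famDist {α : Type*} [DecidableEq α] (𝒜 ℬ : Finset (Finset α)) : ℕ :=
  sInf {n | ∃ A ∈ 𝒜, ∃ B ∈ ℬ, hdist A B = n}

/-- The Hamming ball of center `A` and radius `r`. -/
def hamBall {α : Type*} [DecidableEq α] [Fintype α] (A : Finset α) (r : ℕ) :
    Finset (Finset α) :=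
  Finset.univ.filter fun B => hdist A B ≤ r

/-- `𝒞` is *a* Hamming ball of center `c` (of some radius `r ≥ 1`):
`H_{r-1}(c) ⊆ 𝒞 ⊆ H_r(c)`. -/
def IsHamBall {α : Type*} [DecidableEq α] [Fintype α] (c : Finset α)
    (𝒞 : Finset (Finset α)) : Prop :=
  ∃ r : ℕ, 1 ≤ r ∧ hamBall c (r - 1) ⊆ 𝒞 ∧ 𝒞 ⊆ hamBall c r

lemma mem_hamBall' {α : Type*} [DecidableEq α] [Fintype α] {A B : Finset α} {r : ℕ} :
    B ∈ hamBall A r ↔ hdist A B ≤ r := by simp [hamBall]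

lemma hdist_univ' {α : Type*} [DecidableEq α] [Fintype α] (S : Finset α) :
    hdist Finset.univ S = Fintype.card α - S.card := by
  unfold hdist
  simp [Finset.sdiff_eq_empty_iff_subset.2 (Finset.subset_univ S),
    Finset.card_compl, ← Finset.compl_eq_univ_sdiff]

lemma hdist_empty' {α : Type*} [DecidableEq α] (S : Finset α) : hdist ∅ S = S.card := by
  simp [hdist]

lemma hdist_erase' {α : Type*} [DecidableEq α] (S : Finset α) (x : α) (hx : x ∈ S) :
    hdist S (S.erase x) = 1 := by
  unfold hdist
  rw [Finset.sdiff_eq_empty_iff_subset.2 (Finset.erase_subset x S)]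
  have h : S \ S.erase x = {x} := by
    ext y; simp only [Finset.mem_sdiff, Finset.mem_erase, Finset.mem_singleton]
    constructor
    · tauto
    · rintro rfl; tauto
  simp [h]

lemma hdist_insert' {α : Type*} [DecidableEq α] (S : Finset α) (x : α) (hx : x ∉ S) :
    hdist S (insert x S) = 1 := by
  unfold hdist
  have h1 : S \ insert x S = ∅ := Finset.sdiff_eq_empty_iff_subset.2 (Finset.subset_insert x S)
  have h2 : insert x S \ S = {x} := by
    ext y; simp only [Finset.mem_sdiff, Finset.mem_insert, Finset.mem_singleton]
    constructor
    · tauto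
    · rintro rfl; tauto
  simp [h1, h2]

/-- For `|X| = m` even: if `𝒜₀` is a Hamming ball centered at `X`, `ℬ₀` a Hamming ball
centered at `∅`, `|𝒜₀| = |ℬ₀|`, and every pair has Hamming distance at least `2`, then no
set of size `m/2` lies in `𝒜₀ ∪ ℬ₀`; hence at least `C(m, m/2)` sets lie outside. -/
theorem hamming_balls_even {α : Type*} [DecidableEq α] [Fintype α]
    (hm : Even (Fintype.card α)) (𝒜₀ ℬ₀ : Finset (Finset α))
    (h𝒜 : IsHamBall Finset.univ 𝒜₀) (hℬ : IsHamBall ∅ ℬ₀)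
    (hcard : 𝒜₀.card = ℬ₀.card)
    (hdist2 : ∀ A ∈ 𝒜₀, ∀ B ∈ ℬ₀, 2 ≤ hdist A B) :
    (∀ S : Finset α, S.card = Fintype.card α / 2 → S ∉ 𝒜₀ ∪ ℬ₀) ∧
      Nat.choose (Fintype.card α) (Fintype.card α / 2) ≤
        ((Finset.univ : Finset (Finset α)) \ (𝒜₀ ∪ ℬ₀)).card := by
  obtain ⟨r, hr1, hrl, hru⟩ := h𝒜
  obtain ⟨s, hs1, hsl, hsu⟩ := hℬ
  set m := Fintype.card α with hmdef
  obtain ⟨k, hk⟩ := hm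
  have hk2 : m / 2 = k := by omega
  have key : ∀ S : Finset α, S.card = m / 2 → S ∉ 𝒜₀ ∪ ℬ₀ := by
    intro S hScard hmem
    rw [hk2] at hScard
    rw [Finset.mem_union] at hmem
    rcases Nat.eq_zero_or_pos k with h0 | hpos
    · -- m = 0 : every Finset α is ∅
      have hall : ∀ T : Finset α, T = ∅ := by
        intro T
        have : T.card ≤ m := by simpa [hmdef] using Finset.card_le_univ T
        exact Finset.card_eq_zero.1 (by omega)
      rcases hmem with hA | hB
      · have hBne : ℬ₀.Nonempty := Finset.card_pos.1 (hcard ▸ Finset.card_pos.2 ⟨S, hA⟩)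
        obtain ⟨B, hB⟩ := hBne
        have := hdist2 S hA B hB
        rw [hall S, hall B] at this
        simp [hdist] at this
      · have hAne : 𝒜₀.Nonempty := Finset.card_pos.1 (hcard ▸ Finset.card_pos.2 ⟨S, hB⟩)
        obtain ⟨A, hA⟩ := hAne
        have := hdist2 A hA S hB
        rw [hall S, hall A] at this
        simp [hdist] at this
    · rcases hmem with hmA | hmB
      · -- S ∈ 𝒜₀
        obtain ⟨x, hx⟩ := Finset.card_pos.1 (hScard ▸ hpos)
        have hnotB : S.erase x ∉ ℬ₀ := by
          intro h
          have h2 := hdist2 S hmA _ h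
          rw [hdist_erase' S x hx] at h2
          omega
        have hsk : ¬ (S.erase x ∈ hamBall (∅ : Finset α) (s - 1)) := fun h => hnotB (hsl h)
        rw [mem_hamBall', hdist_empty', Finset.card_erase_of_mem hx, hScard] at hsk
        have hsk' : s ≤ k - 1 := by omega
        have hkr : k ≤ r := by
          have := hru hmA
          rw [mem_hamBall', hdist_univ', hScard] at this
          omega
        have himg : ℬ₀.image compl ⊆ 𝒜₀.erase S := by
          intro T hT
          rw [Finset.mem_image] at hT
          obtain ⟨B, hB, rfl⟩ := hT
          have hBcard : B.card ≤ s := by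
            have := hsu hB; rwa [mem_hamBall', hdist_empty'] at this
          rw [Finset.mem_erase]
          constructor
          · intro hEq
            have : Bᶜ.card = k := hEq ▸ hScard
            rw [Finset.card_compl] at this
            omega
          · apply hrl
            rw [mem_hamBall', hdist_univ', Finset.card_compl]
            omega
        have hle := Finset.card_le_card himg
        rw [Finset.card_image_of_injective _ compl_injective,
          Finset.card_erase_of_mem hmA] at hle
        have hpos' : 1 ≤ 𝒜₀.card := Finset.card_pos.2 ⟨S, hmA⟩
        omega
      · -- S ∈ ℬ₀
        have hScompl : Sᶜ.card = k := by rw [Finset.card_compl, hScard]; omega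
        obtain ⟨x, hx⟩ := Finset.card_pos.1 (hScompl ▸ hpos)
        rw [Finset.mem_compl] at hx
        have hnotA : insert x S ∉ 𝒜₀ := by
          intro h
          have h2 := hdist2 _ h S hmB
          have : hdist S (insert x S) = 1 := hdist_insert' S x hx
          unfold hdist at this h2
          rw [Finset.union_comm] at h2
          omega
        have hrk : ¬ (insert x S ∈ hamBall (Finset.univ : Finset α) (r - 1)) :=
          fun h => hnotA (hrl h)
        rw [mem_hamBall', hdist_univ', Finset.card_insert_of_notMem hx, hScard] at hrk
        have hrk' : r ≤ k - 1 := by omega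
        have hks : k ≤ s := by
          have := hsu hmB
          rw [mem_hamBall', hdist_empty', hScard] at this
          omega
        have himg : 𝒜₀.image compl ⊆ ℬ₀.erase S := by
          intro T hT
          rw [Finset.mem_image] at hT
          obtain ⟨A, hA, rfl⟩ := hT
          have hAcard : m - A.card ≤ r := by
            have := hru hA; rwa [mem_hamBall', hdist_univ'] at this
          have hAu : A.card ≤ m := Finset.card_le_univ A
          rw [Finset.mem_erase]
          constructor
          · intro hEq
            have : Aᶜ.card = k := hEq ▸ hScard
            rw [Finset.card_compl] at this
            omega
          · apply hsl
            rw [mem_hamBall', hdist_empty', Finset.card_compl]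
            omega
        have hle := Finset.card_le_card himg
        rw [Finset.card_image_of_injective _ compl_injective,
          Finset.card_erase_of_mem hmB] at hle
        have hpos' : 1 ≤ ℬ₀.card := Finset.card_pos.2 ⟨S, hmB⟩
        omega
  refine ⟨key, ?_⟩
  have hsub : Finset.univ.powersetCard (m / 2) ⊆
      (Finset.univ : Finset (Finset α)) \ (𝒜₀ ∪ ℬ₀) := by
    intro S hS
    rw [Finset.mem_powersetCard] at hS
    rw [Finset.mem_sdiff]
    exact ⟨Finset.mem_univ S, key S hS.2⟩
  have := Finset.card_le_card hsub
  rwa [Finset.card_powersetCard, Finset.card_univ] at this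
end

section
/- Let m = 2s+1 be odd, and suppose 𝒜₀ is a Hamming ball of center X (|X| = m) and radius r, ℬ₀ a Hamming ball of center ∅ and radius r, with |𝒜₀| = |ℬ₀| and d(𝒜₀, ℬ₀) ≥ 2. Then r ≤ s; moreover if r ≤ s−1 then |2^X \ (𝒜₀ ∪ ℬ₀)| ≥ 2·C(m, s). -/
open Finset

/-!
Both balls are described by cardinality alone: `H_t(X)` is the family of sets of size at least
`m - t` and `H_t(∅)` the family of sets of size at most `t`. If `r ≥ s + 1`, the two balls of
radius `r - 1` contain an `(s+1)`-set and one of its `s`-subsets, which are at distance `1`. If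
`r < s`, no set of size `s` or `s + 1` lies in either ball of radius `r`, and these two middle
layers have `C(m, s) + C(m, s + 1) = 2 C(m, s)` members.
-/

section HammingBall

variable {α : Type*} [DecidableEq α]

lemma hdist_of_subset {A B : Finset α} (h : B ⊆ A) : hdist A B = #A - #B := by
  rw [hdist, sdiff_eq_empty_iff_subset.mpr h, union_empty, card_sdiff_of_subset h]

lemma hdist_empty_left (B : Finset α) : hdist ∅ B = #B := by
  simp [hdist]

variable [Fintype α]

lemma hdist_univ_left (B : Finset α) : hdist univ B = Fintype.card α - #B := by
  rw [hdist_of_subset (subset_univ B), card_univ]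

lemma mem_hamBall_empty {B : Finset α} {t : ℕ} : B ∈ hamBall ∅ t ↔ #B ≤ t := by
  simp [hamBall, hdist_empty_left]

lemma mem_hamBall_univ {B : Finset α} {t : ℕ} :
    B ∈ hamBall univ t ↔ Fintype.card α - #B ≤ t := by
  simp [hamBall, hdist_univ_left]

lemma exists_mem_hamBall_hdist_eq_one {k t : ℕ} (hk : k < Fintype.card α)
    (hkt : k ≤ t) (hnt : Fintype.card α ≤ k + 1 + t) :
    ∃ A ∈ hamBall (univ : Finset α) t, ∃ B ∈ hamBall ∅ t, hdist A B = 1 := by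
  obtain ⟨A, -, hA⟩ := exists_subset_card_eq (s := (univ : Finset α)) (n := k + 1)
    (by rw [card_univ]; omega)
  obtain ⟨B, hBA, hB⟩ := exists_subset_card_eq (s := A) (n := k) (by omega)
  refine ⟨A, mem_hamBall_univ.mpr (by omega), B, mem_hamBall_empty.mpr (by omega), ?_⟩
  rw [hdist_of_subset hBA, hA, hB, Nat.add_sub_cancel_left]

lemma powersetCard_disjoint_hamBall_union {k t : ℕ} (hkt : t < k)
    (hkn : k + t < Fintype.card α) :
    Disjoint (powersetCard k (univ : Finset α)) (hamBall univ t ∪ hamBall ∅ t) := by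
  refine disjoint_left.mpr fun B hB hBt => ?_
  rw [mem_powersetCard_univ] at hB
  rcases mem_union.mp hBt with hBt | hBt
  · rw [mem_hamBall_univ] at hBt
    omega
  · rw [mem_hamBall_empty] at hBt
    omega

lemma card_middle_layers {s : ℕ} (hm : Fintype.card α = 2 * s + 1) :
    #(powersetCard s (univ : Finset α) ∪ powersetCard (s + 1) univ) =
      2 * Nat.choose (2 * s + 1) s := by
  have hdisj : Disjoint (powersetCard s (univ : Finset α)) (powersetCard (s + 1) univ) :=
    pairwise_disjoint_powersetCard univ (by omega)
  rw [card_union_of_disjoint hdisj, card_powersetCard, card_powersetCard, card_univ, hm,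
    Nat.choose_symm_half]
  ring

end HammingBall

theorem hamming_balls_odd_general {α : Type*} [DecidableEq α] [Fintype α] (s r : ℕ)
    (hm : Fintype.card α = 2 * s + 1) (𝒜₀ ℬ₀ : Finset (Finset α))
    (h𝒜l : hamBall (Finset.univ : Finset α) (r - 1) ⊆ 𝒜₀) (h𝒜u : 𝒜₀ ⊆ hamBall Finset.univ r)
    (hℬl : hamBall (∅ : Finset α) (r - 1) ⊆ ℬ₀) (hℬu : ℬ₀ ⊆ hamBall ∅ r)
    (hdist2 : ∀ A ∈ 𝒜₀, ∀ B ∈ ℬ₀, 2 ≤ hdist A B) :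
    r ≤ s ∧ (r < s →
      2 * Nat.choose (2 * s + 1) s ≤
        ((Finset.univ : Finset (Finset α)) \ (𝒜₀ ∪ ℬ₀)).card) := by
  refine ⟨?_, fun hrs => ?_⟩
  · by_contra! hsr
    obtain ⟨A, hA, B, hB, hAB⟩ :=
      exists_mem_hamBall_hdist_eq_one (α := α) (k := s) (t := r - 1) (by omega)
        (by omega) (by omega)
    have := hdist2 A (h𝒜l hA) B (hℬl hB)
    omega
  · have hlayer : ∀ k, r < k → k + r < 2 * s + 1 →
        powersetCard k (univ : Finset α) ⊆ univ \ (𝒜₀ ∪ ℬ₀) := fun k hrk hkn =>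
      subset_sdiff.mpr ⟨subset_univ _,
        (powersetCard_disjoint_hamBall_union hrk (by omega)).mono_right
          (union_subset_union h𝒜u hℬu)⟩
    rw [← card_middle_layers hm]
    exact card_le_card
      (union_subset (hlayer s hrs (by omega)) (hlayer (s + 1) (by omega) (by omega)))

/-- For `m = 2s + 1` odd: if `𝒜₀` is a Hamming ball of center `X` and radius `r`, `ℬ₀` a
Hamming ball of center `∅` and radius `r`, with equal sizes and pairwise distance at least
`2`, then `r ≤ s`; moreover if `r ≤ s - 1` then at least `2·C(m, s)` sets lie outside
`𝒜₀ ∪ ℬ₀`. -/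
theorem hamming_balls_odd {α : Type*} [DecidableEq α] [Fintype α] (s r : ℕ)
    (hm : Fintype.card α = 2 * s + 1) (hr : 1 ≤ r) (𝒜₀ ℬ₀ : Finset (Finset α))
    (h𝒜l : hamBall (Finset.univ : Finset α) (r - 1) ⊆ 𝒜₀) (h𝒜u : 𝒜₀ ⊆ hamBall Finset.univ r)
    (hℬl : hamBall (∅ : Finset α) (r - 1) ⊆ ℬ₀) (hℬu : ℬ₀ ⊆ hamBall ∅ r)
    (hcard : 𝒜₀.card = ℬ₀.card)
    (hdist2 : ∀ A ∈ 𝒜₀, ∀ B ∈ ℬ₀, 2 ≤ hdist A B) :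
    r ≤ s ∧ (r < s →
      2 * Nat.choose (2 * s + 1) s ≤
        ((Finset.univ : Finset (Finset α)) \ (𝒜₀ ∪ ℬ₀)).card) :=
  hamming_balls_odd_general s r hm 𝒜₀ ℬ₀ h𝒜l h𝒜u hℬl hℬu hdist2
end

section
/- (Consequence of Björner's theorem) Let |X| = m = 2s+1. If a Sperner family in 2^X consists of exactly t sets of size s+1 and t sets of size s, then t ≤ C(m−1, s−1) = C(2s, s−1). -/
/-!
In an antichain `𝒮`, the `s`-sets lying below a member of `𝒮` split disjointly into the
`s`-sets of `𝒮` and the shadow of the family `ℱ` of `(s+1)`-sets lying below a member of `𝒮`,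
so `t + |∂ℱ| ≤ C(2s+1, s)`, while `ℱ` contains the `t` top sets of `𝒮`. If `t ≥ C(2s, s+1)`,
Lovász's form of the Kruskal–Katona theorem gives `|∂ℱ| ≥ C(2s, s)`, and Pascal's rule leaves
`t ≤ C(2s, s-1)`; otherwise `t < C(2s, s+1) = C(2s, s-1)` already.
-/

open Finset
open scoped FinsetFamily

namespace Finset
variable {α β : Type*} [DecidableEq α] [DecidableEq β]

theorem map_shadow (f : α ↪ β) (𝒜 : Finset (Finset α)) :
    (∂ 𝒜).map (mapEmbedding f).toEmbedding = ∂ (𝒜.map (mapEmbedding f).toEmbedding) := by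
  ext B
  simp only [mem_map, mem_shadow_iff, RelEmbedding.coe_toEmbedding, mapEmbedding_apply]
  constructor
  · rintro ⟨_, ⟨A, hA, a, ha, rfl⟩, rfl⟩
    exact ⟨_, ⟨A, hA, rfl⟩, f a, mem_map_of_mem f ha, (map_erase f A a).symm⟩
  · rintro ⟨_, ⟨A, hA, rfl⟩, b, hb, rfl⟩
    obtain ⟨a, ha, rfl⟩ := mem_map.1 hb
    exact ⟨_, ⟨A, hA, a, ha, rfl⟩, map_erase f A a⟩

theorem map_iterate_shadow (f : α ↪ β) (𝒜 : Finset (Finset α)) (i : ℕ) :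
    (∂^[i] 𝒜).map (mapEmbedding f).toEmbedding = ∂^[i] (𝒜.map (mapEmbedding f).toEmbedding) :=
  Function.Semiconj.iterate_right (map_shadow f) i 𝒜

theorem kruskal_katona_lovasz_form_of_fintype [Fintype α] {𝒜 : Finset (Finset α)} {i r k : ℕ}
    (hir : i ≤ r) (hrk : r ≤ k) (hkα : k ≤ Fintype.card α)
    (h𝒜 : (𝒜 : Set (Finset α)).Sized r) (hk𝒜 : k.choose r ≤ #𝒜) :
    k.choose (r - i) ≤ #(∂^[i] 𝒜) := by
  set e := (mapEmbedding (Fintype.equivFin α).toEmbedding).toEmbedding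
  rw [← card_map e, map_iterate_shadow]
  refine kruskal_katona_lovasz_form hir hrk hkα ?_ (hk𝒜.trans_eq (card_map e).symm)
  intro B hB
  obtain ⟨A, hA, rfl⟩ := mem_map.1 hB
  simpa [e] using h𝒜 hA

theorem IsAntichain.card_slice_add_card_shadow_falling_le [Fintype α]
    {𝒜 : Finset (Finset α)} (h𝒜 : IsAntichain (· ⊆ ·) (𝒜 : Set (Finset α))) (k : ℕ) :
    #(𝒜 # k) + #(∂ (falling (k + 1) 𝒜)) ≤ (Fintype.card α).choose k := by
  rw [← card_union_of_disjoint h𝒜.disjoint_slice_shadow_falling, slice_union_shadow_falling_succ]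
  exact Set.Sized.card_le (sized_falling k 𝒜)

end Finset

theorem sperner_two_level_bound_general {α : Type*} [Fintype α] (s t : ℕ)
    (hs : 1 ≤ s) (hm : Fintype.card α = 2 * s + 1) (𝒮 : Finset (Finset α))
    (hanti : IsAntichain (· ⊆ ·) (↑𝒮 : Set (Finset α)))
    (htop : (𝒮.filter fun A => A.card = s + 1).card = t)
    (hbot : (𝒮.filter fun A => A.card = s).card = t) :
    t ≤ Nat.choose (2 * s) (s - 1) := by
  classical
  have hsymm : (2 * s).choose (s + 1) = (2 * s).choose (s - 1) := by
    rw [← Nat.choose_symm (by omega)]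
    congr 1
    omega
  have hpascal : (2 * s + 1).choose s = (2 * s).choose (s - 1) + (2 * s).choose s := by
    have := Nat.choose_succ_succ' (2 * s) (s - 1)
    rwa [Nat.sub_add_cancel hs] at this
  have hlevels := hanti.card_slice_add_card_shadow_falling_le s
  have hslice : #(𝒮 # s) = t := hbot
  rw [hm] at hlevels
  rcases lt_or_ge t ((2 * s).choose (s + 1)) with hsmall | hlarge
  · omega
  have hfalling : t ≤ #(falling (s + 1) 𝒮) := htop ▸ card_le_card (slice_subset_falling _ _)
  have hshadow := kruskal_katona_lovasz_form_of_fintype (i := 1) (by omega) (by omega)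
    (by omega) (sized_falling (s + 1) 𝒮) (hlarge.trans hfalling)
  rw [Function.iterate_one, Nat.add_sub_cancel] at hshadow
  omega

/-- Consequence of Björner's theorem: in a ground set of size `m = 2s + 1`, a Sperner family
consisting of exactly `t` sets of size `s + 1` and `t` sets of size `s` has
`t ≤ C(m - 1, s - 1) = C(2s, s - 1)`. -/
theorem sperner_two_level_bound {α : Type*} [DecidableEq α] [Fintype α] (s t : ℕ)
    (hs : 1 ≤ s) (hm : Fintype.card α = 2 * s + 1) (𝒮 : Finset (Finset α))
    (hanti : IsAntichain (· ⊆ ·) (↑𝒮 : Set (Finset α)))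
    (hsizes : ∀ A ∈ 𝒮, A.card = s ∨ A.card = s + 1)
    (htop : (𝒮.filter fun A => A.card = s + 1).card = t)
    (hbot : (𝒮.filter fun A => A.card = s).card = t) :
    t ≤ Nat.choose (2 * s) (s - 1) :=
  sperner_two_level_bound_general s t hs hm 𝒮 hanti htop hbot
end

section
/- For a single agent with monotonic valuation u on subsets of M with |M| = m, the number of subsets A ⊆ M such that both A and M \ A are EF1 for u is at least C(m, m/2) for m even and at least 2·C(m−1, (m−1)/2) for m odd. -/
open Finset Classical

/-!
Call `X ⊆ M` bad when its complement `M \ X` is not EF1 for `u`. Two bad sets share at least two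
items: otherwise, after removing the shared item, each lies inside the complement of the other, and
monotonicity of `u` closes a cycle of strict inequalities. By Katona's intersection theorem a
`2`-intersecting family on `m` points has at most `2^(m-1) - C(m-1, ⌊(m-1)/2⌋)` members. The bundles
`A` that are not EF1 are the complements of bad sets, so at least `2·C(m-1, ⌊(m-1)/2⌋)` bundles
survive both tests, which is `C(m, m/2)` when `m > 0` is even.

Katona's theorem rests on his shadow theorem (an intersecting family is no larger than its shadow),
proved by shifting and induction on the ground set. With `s = ⌊m/2⌋`, members of size at most `s`
are traded for their shadows and members of size more than `m - s` for their complements. All of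
these are sets of size less than `s`, and none arises both ways, as that would make two members
share at most one point. For odd `m` the remaining middle layer is bounded by Erdős–Ko–Rado.
-/

open UV
open scoped FinsetFamily

lemma Nat.sum_range_choose_halfway_even (m : ℕ) :
    ∑ j ∈ Finset.range (m + 1), (2 * m + 2).choose j + (2 * m + 1).choose m = 2 ^ (2 * m + 1) := by
  have hpascal (j : ℕ) :
      (2 * m + 2).choose (j + 1) = (2 * m + 1).choose j + (2 * m + 1).choose (j + 1) :=
    Nat.choose_succ_succ' _ _
  have h1 := Nat.sum_range_choose_halfway m
  have h2 := h1
  rw [sum_range_succ] at h1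
  rw [sum_range_succ', Nat.choose_zero_right] at h2
  rw [sum_range_succ', Nat.choose_zero_right]
  simp only [hpascal, sum_add_distrib]
  rw [pow_succ, pow_mul, show (2 : ℕ) ^ 2 = 4 from rfl]
  omega

lemma Nat.sum_range_choose_halfway_odd (t : ℕ) :
    ∑ j ∈ Finset.range t, (2 * t + 1).choose j + (2 * t).choose t + (2 * t).choose (t + 1) =
      4 ^ t := by
  rw [add_assoc, ← Nat.choose_succ_succ', Nat.choose_symm_half, ← sum_range_succ,
    Nat.sum_range_choose_halfway]

namespace Finset

section Compression

variable {α : Type*} [DecidableEq α] {𝒜 : Finset (Finset α)} {i j : α}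

lemma compress_singleton_of_notMem_of_mem {B : Finset α} (hi : i ∉ B) (hj : j ∈ B) :
    compress {i} {j} B = insert i (B.erase j) := by
  rw [compress_of_disjoint_of_le (disjoint_singleton_left.2 hi) (singleton_subset_iff.2 hj)]
  ext a
  simp only [sup_eq_union, mem_sdiff, mem_union, mem_singleton, mem_insert, mem_erase]
  constructor
  · rintro ⟨ha | rfl, hne⟩
    · exact Or.inr ⟨hne, ha⟩
    · exact Or.inl rfl
  · rintro (rfl | ⟨hne, ha⟩)
    · exact ⟨Or.inr rfl, fun h => hi (h ▸ hj)⟩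
    · exact ⟨Or.inl ha, hne⟩

lemma notMem_and_mem_of_compress_ne {B : Finset α} (h : compress {i} {j} B ≠ B) :
    i ∉ B ∧ j ∈ B := by
  by_contra hc
  exact h (if_neg fun hc' => hc ⟨disjoint_singleton_left.1 hc'.1, singleton_subset_iff.1 hc'.2⟩)

lemma not_disjoint_of_mem_compression_of_notMem (h : (𝒜 : Set (Finset α)).Intersecting)
    {X Y : Finset α} (hX : X ∈ 𝓒 {i} {j} 𝒜) (hX𝒜 : X ∉ 𝒜) (hY : Y ∈ 𝓒 {i} {j} 𝒜) (hY𝒜 : Y ∈ 𝒜) :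
    ¬Disjoint X Y := by
  have hiX : i ∈ X := singleton_subset_iff.1 (le_of_mem_compression_of_notMem hX hX𝒜)
  have hB : (X ∪ {j}) \ {i} ∈ 𝒜 := sup_sdiff_mem_of_mem_compression_of_notMem hX hX𝒜
  have hcY : compress {i} {j} Y ∈ 𝒜 := ((mem_compression.1 hY).resolve_right (by tauto)).2
  have mem_X : ∀ a ∈ (X ∪ {j}) \ {i}, a ≠ j → a ∈ X := by
    intro a ha haj
    simpa [haj] using (mem_sdiff.1 ha).1
  obtain ⟨a, haB, haY⟩ := not_disjoint_iff.1 (h hB hY𝒜)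
  rcases ne_or_eq a j with haj | rfl
  · exact not_disjoint_iff.2 ⟨a, mem_X a haB haj, haY⟩
  by_cases hiY : i ∈ Y
  · exact not_disjoint_iff.2 ⟨i, hiX, hiY⟩
  rw [compress_singleton_of_notMem_of_mem hiY haY] at hcY
  obtain ⟨b, hbB, hbY⟩ := not_disjoint_iff.1 (h hB hcY)
  have hbi : b ≠ i := by simpa using (mem_sdiff.1 hbB).2
  obtain ⟨hba, hbY⟩ := mem_erase.1 ((mem_insert.1 hbY).resolve_left hbi)
  exact not_disjoint_iff.2 ⟨b, mem_X b hbB hba, hbY⟩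

lemma _root_.Set.Intersecting.uvCompression (h : (𝒜 : Set (Finset α)).Intersecting) :
    ((𝓒 {i} {j} 𝒜 : Finset (Finset α)) : Set (Finset α)).Intersecting := by
  intro X hX Y hY
  by_cases hX𝒜 : X ∈ 𝒜 <;> by_cases hY𝒜 : Y ∈ 𝒜
  · exact h hX𝒜 hY𝒜
  · exact fun hXY => not_disjoint_of_mem_compression_of_notMem h hY hY𝒜 hX hX𝒜 hXY.symm
  · exact not_disjoint_of_mem_compression_of_notMem h hX hX𝒜 hY hY𝒜
  · exact not_disjoint_iff.2 ⟨i, singleton_subset_iff.1 (le_of_mem_compression_of_notMem hX hX𝒜),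
      singleton_subset_iff.1 (le_of_mem_compression_of_notMem hY hY𝒜)⟩

end Compression

section Shadow

variable {α : Type*} [DecidableEq α]

lemma card_mul_le_card_shadow_mul_of_subset_powerset {G : Finset α} {𝒜 : Finset (Finset α)}
    {r : ℕ} (h𝒜 : 𝒜 ⊆ G.powerset) (hr : (𝒜 : Set (Finset α)).Sized r) :
    #𝒜 * r ≤ #(∂ 𝒜) * (#G + 1 - r) := by
  refine card_mul_le_card_mul' (· ⊆ ·) (fun s hs => ?_) (fun t ht => ?_)
  · rw [← hr hs, ← card_image_of_injOn s.erase_injOn]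
    refine card_le_card ?_
    simp_rw [image_subset_iff, mem_bipartiteBelow]
    exact fun a ha => ⟨erase_mem_shadow hs ha, erase_subset _ _⟩
  · obtain ⟨s, hs, hts, hcard⟩ := mem_shadow_iff_exists_mem_card_add_one.1 ht
    have habove : 𝒜.bipartiteAbove (· ⊆ ·) t ⊆ (G \ t).image (insert · t) := by
      intro b hb
      obtain ⟨hb𝒜, htb⟩ := (mem_bipartiteAbove _).1 hb
      obtain ⟨a, ha, rfl⟩ := exists_eq_insert_iff.2 ⟨htb, by rw [hr hb𝒜, ← hr hs, hcard]⟩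
      exact mem_image_of_mem _ (mem_sdiff.2 ⟨mem_powerset.1 (h𝒜 hb𝒜) (mem_insert_self a t), ha⟩)
    have htG : t ⊆ G := hts.trans (mem_powerset.1 (h𝒜 hs))
    calc #(𝒜.bipartiteAbove (· ⊆ ·) t) ≤ #(G \ t) := (card_le_card habove).trans card_image_le
      _ ≤ #G + 1 - r := by rw [card_sdiff_of_subset htG, ← hr hs]; omega

lemma card_shadow_memberSubfamily_add_card_shadow_nonMemberSubfamily_le (a : α)
    (𝒜 : Finset (Finset α)) :
    #(∂ (𝒜.memberSubfamily a)) + #(∂ (𝒜.nonMemberSubfamily a)) ≤ #(∂ 𝒜) := by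
  rw [← card_memberSubfamily_add_card_nonMemberSubfamily a (∂ 𝒜)]
  gcongr
  · intro s hs
    obtain ⟨b, hbs, hb⟩ := mem_shadow_iff_insert_mem.1 hs
    rw [mem_memberSubfamily] at hb ⊢
    have hba : b ≠ a := fun h => hb.2 (h ▸ mem_insert_self b s)
    refine ⟨mem_shadow_iff_insert_mem.2 ⟨b, ?_, by rw [insert_comm]; exact hb.1⟩,
      fun h => hb.2 (mem_insert_of_mem h)⟩
    simp [hbs, hba]
  · intro s hs
    obtain ⟨t, ht, b, hb, rfl⟩ := mem_shadow_iff.1 hs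
    rw [mem_nonMemberSubfamily] at ht ⊢
    exact ⟨erase_mem_shadow ht.1 hb, fun h => ht.2 (mem_of_mem_erase h)⟩

end Shadow

section Shifting

variable {𝒜 : Finset (Finset ℕ)} {i j k n : ℕ}

def IsShifted (𝒜 : Finset (Finset ℕ)) : Prop := ∀ ⦃i j : ℕ⦄, i < j → IsCompressed {i} {j} 𝒜

lemma IsShifted.insert_erase_mem (h : IsShifted 𝒜) {A : Finset ℕ} (hA : A ∈ 𝒜) (hij : i < j)
    (hi : i ∉ A) (hj : j ∈ A) : insert i (A.erase j) ∈ 𝒜 := by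
  have := compress_mem_compression (u := {i}) (v := {j}) hA
  rwa [h hij, compress_singleton_of_notMem_of_mem hi hj] at this

def elementSum (𝒜 : Finset (Finset ℕ)) : ℕ := ∑ A ∈ 𝒜, ∑ a ∈ A, a

lemma elementSum_compression_lt (hij : i < j) (h : 𝓒 {i} {j} 𝒜 ≠ 𝒜) :
    elementSum (𝓒 {i} {j} 𝒜) < elementSum 𝒜 := by
  rw [compression] at h ⊢
  have hsplit : {A ∈ 𝒜 | compress {i} {j} A ∈ 𝒜} ∪ {A ∈ 𝒜 | compress {i} {j} A ∉ 𝒜} = 𝒜 :=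
    filter_union_filter_not_eq _ _
  have hmoved : {A ∈ 𝒜 | compress {i} {j} A ∉ 𝒜}.Nonempty := by
    contrapose! h
    rw [filter_image, h, image_empty, union_empty]
    rwa [h, union_empty] at hsplit
  rw [elementSum, elementSum, sum_union compress_disjoint]
  conv_rhs => rw [← hsplit]
  rw [sum_union (disjoint_filter_filter_not _ _ _), add_lt_add_iff_left, filter_image,
    sum_image compress_injOn]
  refine sum_lt_sum_of_nonempty hmoved fun A hA => ?_
  obtain ⟨hA𝒜, hcA⟩ := mem_filter.1 hA
  obtain ⟨hi, hj⟩ := notMem_and_mem_of_compress_ne fun h => hcA (h ▸ hA𝒜)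
  rw [compress_singleton_of_notMem_of_mem hi hj, sum_insert fun h => hi (mem_of_mem_erase h),
    ← add_sum_erase A _ hj]
  omega

lemma compression_subset_powerset_range (hij : i < j) (h𝒜 : 𝒜 ⊆ (range n).powerset) :
    𝓒 {i} {j} 𝒜 ⊆ (range n).powerset := by
  intro X hX
  by_cases hX𝒜 : X ∈ 𝒜
  · exact h𝒜 hX𝒜
  obtain ⟨B, hB, rfl⟩ := ((mem_compression.1 hX).resolve_left (by tauto)).2
  obtain ⟨hi, hj⟩ := notMem_and_mem_of_compress_ne fun h => hX𝒜 (h ▸ hB)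
  have hBn := mem_powerset.1 (h𝒜 hB)
  rw [compress_singleton_of_notMem_of_mem hi hj, mem_powerset]
  refine insert_subset ?_ ((erase_subset _ _).trans hBn)
  have := mem_range.1 (hBn hj)
  exact mem_range.2 (by omega)

lemma exists_isShifted (h𝒜 : 𝒜 ⊆ (range n).powerset)
    (hk : (𝒜 : Set (Finset ℕ)).Sized k) (hI : (𝒜 : Set (Finset ℕ)).Intersecting) :
    ∃ ℬ ⊆ (range n).powerset, (ℬ : Set (Finset ℕ)).Sized k ∧
      (ℬ : Set (Finset ℕ)).Intersecting ∧ IsShifted ℬ ∧ #ℬ = #𝒜 ∧ #(∂ ℬ) ≤ #(∂ 𝒜) := by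
  set S : Set (Finset (Finset ℕ)) := {ℬ | ℬ ⊆ (range n).powerset ∧
    (ℬ : Set (Finset ℕ)).Sized k ∧ (ℬ : Set (Finset ℕ)).Intersecting ∧ #ℬ = #𝒜 ∧
      #(∂ ℬ) ≤ #(∂ 𝒜)}
  obtain ⟨ℬ, ⟨hℬn, hℬk, hℬI, hℬcard, hℬshadow⟩, hmin⟩ :=
    (measure elementSum).wf.has_min S ⟨𝒜, h𝒜, hk, hI, rfl, le_rfl⟩
  refine ⟨ℬ, hℬn, hℬk, hℬI, fun i j hij => ?_, hℬcard, hℬshadow⟩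
  by_contra hne
  refine hmin (𝓒 {i} {j} ℬ) ⟨compression_subset_powerset_range hij hℬn,
    hℬk.uvCompression (by simp), hℬI.uvCompression, (card_compression _ _ _).trans hℬcard,
    (card_shadow_compression_le _ _ ?_).trans hℬshadow⟩ (elementSum_compression_lt hij hne)
  simpa using isCompressed_self ∅ ℬ

lemma IsShifted.exists_mem_inter_lt (hS : IsShifted 𝒜) (hk : (𝒜 : Set (Finset ℕ)).Sized k)
    (hI : (𝒜 : Set (Finset ℕ)).Intersecting) {A B : Finset ℕ} (hA : A ∈ 𝒜) (hB : B ∈ 𝒜) :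
    ∃ y ∈ A ∩ B, y + 1 < 2 * k := by
  induction hAB : #(A ∩ B) using Nat.strong_induction_on generalizing A with
  | _ d ih =>
  -- Otherwise shift a common element down to a position below `2k - 1` missed by `A ∪ B` (which
  -- has at most `2k - 1` elements): the new member meets `B` in fewer elements.
  by_contra! hlarge
  obtain ⟨z, hz⟩ := not_disjoint_iff_nonempty_inter.1 (hI hA hB)
  have hzA := (mem_inter.1 hz).1
  have hz_range : z ∉ range (2 * k - 1) := by have := hlarge z hz; rw [mem_range]; omega
  have hAB_pos := card_pos.2 ⟨z, hz⟩
  have hcard : #(A ∪ B) < #(insert z (range (2 * k - 1))) := by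
    have := card_union_add_card_inter A B
    rw [card_insert_of_notMem hz_range, card_range, hk hA, hk hB] at *
    omega
  obtain ⟨y, hy, hyAB⟩ := exists_mem_notMem_of_card_lt_card hcard
  have hyz : y ≠ z := fun h => hyAB (mem_union_left _ (h ▸ hzA))
  have hyk := mem_range.1 ((mem_insert.1 hy).resolve_left hyz)
  have hyB : y ∉ B := fun h => hyAB (mem_union_right _ h)
  have hA' := hS.insert_erase_mem (i := y) hA (by have := hlarge z hz; omega)
    (fun h => hyAB (mem_union_left _ h)) hzA
  have hinter : insert y (A.erase z) ∩ B = (A ∩ B).erase z := by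
    rw [insert_inter_of_notMem hyB, erase_inter]
  obtain ⟨w, hw, hwk⟩ := ih _ (by rw [← hAB, hinter, card_erase_of_mem hz]; omega) hA' rfl
  rw [hinter] at hw
  exact absurd (hlarge w (mem_of_mem_erase hw)) (by omega)

lemma IsShifted.intersecting_memberSubfamily (hS : IsShifted 𝒜)
    (hk : (𝒜 : Set (Finset ℕ)).Sized k) (hI : (𝒜 : Set (Finset ℕ)).Intersecting)
    (hkn : 2 * k ≤ n + 1) :
    ((𝒜.memberSubfamily n : Finset (Finset ℕ)) : Set (Finset ℕ)).Intersecting := by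
  intro S hS' T hT'
  rw [mem_coe, mem_memberSubfamily] at hS' hT'
  obtain ⟨y, hy, hyk⟩ := hS.exists_mem_inter_lt hk hI hS'.1 hT'.1
  have hyn : y ≠ n := by omega
  rw [mem_inter, mem_insert, mem_insert] at hy
  exact not_disjoint_iff.2 ⟨y, hy.1.resolve_left hyn, hy.2.resolve_left hyn⟩

lemma subset_range_of_subset_range_succ {A : Finset ℕ} (hA : A ⊆ range (n + 1)) (hn : n ∉ A) :
    A ⊆ range n := by
  rwa [range_add_one, subset_insert_iff_of_notMem hn] at hA

theorem card_le_card_shadow_of_sized (h𝒜 : 𝒜 ⊆ (range n).powerset)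
    (hk : (𝒜 : Set (Finset ℕ)).Sized k) (hI : (𝒜 : Set (Finset ℕ)).Intersecting) :
    #𝒜 ≤ #(∂ 𝒜) := by
  induction n generalizing k 𝒜 with
  | zero =>
    suffices 𝒜 = ∅ by simp [this]
    refine eq_empty_of_forall_notMem fun A hA => hI.bot_notMem ?_
    simpa [subset_empty.1 (mem_powerset.1 (h𝒜 hA))] using hA
  | succ n ih =>
    obtain ⟨ℬ, hℬn, hℬk, hℬI, hℬS, hcard, hshadow⟩ := exists_isShifted h𝒜 hk hI
    rw [← hcard]
    refine le_trans ?_ hshadow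
    by_cases hnk : n + 1 < 2 * k
    · have hlym := card_mul_le_card_shadow_mul_of_subset_powerset hℬn hℬk
      rw [card_range] at hlym
      exact Nat.le_of_mul_le_mul_right (hlym.trans (Nat.mul_le_mul_left _ (by omega))) (by omega)
    have h₀ : #(ℬ.nonMemberSubfamily n) ≤ #(∂ (ℬ.nonMemberSubfamily n)) := by
      refine ih (fun A hA => ?_) (hℬk.mono (coe_subset.2 (filter_subset _ _)))
        (hℬI.mono (coe_subset.2 (filter_subset _ _)))
      rw [mem_nonMemberSubfamily] at hA
      exact mem_powerset.2 (subset_range_of_subset_range_succ (mem_powerset.1 (hℬn hA.1)) hA.2)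
    have h₁ : #(ℬ.memberSubfamily n) ≤ #(∂ (ℬ.memberSubfamily n)) := by
      refine ih (k := k - 1) (fun A hA => ?_) (fun A hA => ?_)
        (hℬS.intersecting_memberSubfamily hℬk hℬI (by omega))
      · rw [mem_memberSubfamily] at hA
        exact mem_powerset.2 (subset_range_of_subset_range_succ
          ((subset_insert n A).trans (mem_powerset.1 (hℬn hA.1))) hA.2)
      · rw [mem_coe, mem_memberSubfamily] at hA
        have := hℬk hA.1
        rw [card_insert_of_notMem hA.2] at this
        omega
    have := card_memberSubfamily_add_card_nonMemberSubfamily n ℬ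
    have := card_shadow_memberSubfamily_add_card_shadow_nonMemberSubfamily_le n ℬ
    omega

end Shifting

/-- **Katona's shadow theorem**. -/
theorem card_le_card_shadow_of_intersecting {𝒜 : Finset (Finset ℕ)}
    (hI : (𝒜 : Set (Finset ℕ)).Intersecting) : #𝒜 ≤ #(∂ 𝒜) := by
  obtain ⟨n, hn⟩ := exists_nat_subset_range (𝒜.biUnion id)
  have h𝒜 : 𝒜 ⊆ (range n).powerset := fun A hA =>
    mem_powerset.2 ((subset_biUnion_of_mem id hA).trans hn)
  have hdisj : ((range (n + 1) : Finset ℕ) : Set ℕ).PairwiseDisjoint fun r => ∂ (𝒜 # r) := by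
    intro r _ r' _ hrr'
    refine disjoint_left.2 fun S hS hS' => hrr' ?_
    obtain ⟨A, hA, -, hAS⟩ := mem_shadow_iff_exists_mem_card_add_one.1 hS
    obtain ⟨A', hA', -, hA'S⟩ := mem_shadow_iff_exists_mem_card_add_one.1 hS'
    rw [← sized_slice hA, ← sized_slice hA', hAS, hA'S]
  calc #𝒜 = ∑ r ∈ range (n + 1), #(𝒜 # r) := by
        refine card_eq_sum_card_fiberwise fun A hA => ?_
        have := card_le_card (mem_powerset.1 (h𝒜 hA))
        rw [card_range] at this
        exact mem_range.2 (by omega)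
    _ ≤ ∑ r ∈ range (n + 1), #(∂ (𝒜 # r)) := sum_le_sum fun r _ =>
        card_le_card_shadow_of_sized (slice_subset.trans h𝒜) sized_slice
          (hI.mono (coe_subset.2 slice_subset))
    _ = #((range (n + 1)).biUnion fun r => ∂ (𝒜 # r)) := (card_biUnion hdisj).symm
    _ ≤ #(∂ 𝒜) := card_le_card (biUnion_subset.2 fun r _ => shadow_mono slice_subset)

lemma card_powerset_filter_card_lt {α : Type*} (G : Finset α) (s : ℕ) :
    #{S ∈ G.powerset | #S < s} = ∑ j ∈ range s, (#G).choose j := by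
  rw [card_eq_sum_card_fiberwise (f := card) (t := range s)
    fun S hS => mem_range.2 (mem_filter.1 hS).2]
  refine sum_congr rfl fun j hj => ?_
  rw [← card_powersetCard]
  congr 1
  ext S
  simp only [mem_filter, mem_powerset, mem_powersetCard]
  constructor
  · exact fun h => ⟨h.1.1, h.2⟩
  · exact fun h => ⟨⟨h.1, h.2 ▸ mem_range.1 hj⟩, h.2⟩

section TwoIntersecting

variable {α β : Type*} [DecidableEq α] [DecidableEq β] {𝒜 : Finset (Finset α)}

def TwoIntersecting (𝒜 : Finset (Finset α)) : Prop := ∀ A ∈ 𝒜, ∀ B ∈ 𝒜, 2 ≤ #(A ∩ B)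

lemma TwoIntersecting.mono {ℬ : Finset (Finset α)} (hℬ𝒜 : ℬ ⊆ 𝒜) (h : TwoIntersecting 𝒜) :
    TwoIntersecting ℬ :=
  fun A hA B hB => h A (hℬ𝒜 hA) B (hℬ𝒜 hB)

lemma TwoIntersecting.intersecting (h : TwoIntersecting 𝒜) :
    (𝒜 : Set (Finset α)).Intersecting := by
  intro A hA B hB hAB
  have := h A hA B hB
  rw [disjoint_iff_inter_eq_empty.1 hAB, card_empty] at this
  omega

lemma TwoIntersecting.image {f : α → β} {G : Finset α} (hf : Set.InjOn f G)
    (h𝒜 : 𝒜 ⊆ G.powerset) (h : TwoIntersecting 𝒜) : TwoIntersecting (𝒜.image (·.image f)) := by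
  simp only [TwoIntersecting, forall_mem_image]
  intro A hA B hB
  have hAB : ((A ∩ B : Finset α) : Set α) ⊆ G :=
    coe_subset.2 (inter_subset_left.trans (mem_powerset.1 (h𝒜 hA)))
  calc 2 ≤ #(A ∩ B) := h A hA B hB
    _ = #((A ∩ B).image f) := (card_image_of_injOn (hf.mono hAB)).symm
    _ ≤ #(A.image f ∩ B.image f) := card_le_card (image_inter_subset f A B)

lemma TwoIntersecting.intersecting_compls [Fintype α] {k : ℕ} (h : TwoIntersecting 𝒜)
    (hk : (𝒜 : Set (Finset α)).Sized k) (hkα : 2 * k < Fintype.card α + 2) :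
    ((𝒜ᶜˢ : Finset (Finset α)) : Set (Finset α)).Intersecting := by
  intro X hX Y hY hXY
  rw [mem_coe, mem_compls] at hX hY
  have hunion : Xᶜ ∪ Yᶜ = univ := by
    rw [← compl_inter, disjoint_iff_inter_eq_empty.1 hXY, compl_empty]
  have := card_union_add_card_inter Xᶜ Yᶜ
  rw [hunion, card_univ, hk hX, hk hY] at this
  have := h _ hX _ hY
  omega

lemma TwoIntersecting.disjoint_shadow_image_sdiff (h : TwoIntersecting 𝒜) (G : Finset α) :
    Disjoint (∂ 𝒜) (𝒜.image (G \ ·)) := by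
  refine disjoint_left.2 fun S hS hS' => ?_
  obtain ⟨A, hA, a, ha, rfl⟩ := mem_shadow_iff.1 hS
  obtain ⟨Y, hY, hYS⟩ := mem_image.1 hS'
  have hAY : A ∩ Y ⊆ {a} := by
    intro x hx
    by_contra hxa
    have : x ∈ G \ Y := hYS ▸ mem_erase.2 ⟨by simpa using hxa, (mem_inter.1 hx).1⟩
    exact (mem_sdiff.1 this).2 (mem_inter.1 hx).2
  have := h A hA Y hY
  have := card_le_card hAY
  rw [card_singleton] at this
  omega

end TwoIntersecting

section KatonaIntersection

variable {𝒜 : Finset (Finset ℕ)} {G : Finset ℕ}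

theorem TwoIntersecting.card_filter_le (h𝒜 : 𝒜 ⊆ G.powerset) (h : TwoIntersecting 𝒜) (s : ℕ) :
    #{A ∈ 𝒜 | #A ≤ s ∨ #G < #A + s} ≤ #{S ∈ G.powerset | #S < s} := by
  set L := {A ∈ 𝒜 | #A ≤ s}
  set U := {A ∈ 𝒜 | #G < #A + s}
  have hU : #(U.image (G \ ·)) = #U := by
    refine card_image_of_injOn fun X hX Y hY hXY => ?_
    have hXG := mem_powerset.1 (h𝒜 (mem_filter.1 hX).1)
    have hYG := mem_powerset.1 (h𝒜 (mem_filter.1 hY).1)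
    rw [← sdiff_sdiff_eq_self hXG, ← sdiff_sdiff_eq_self hYG]
    exact congrArg (G \ ·) hXY
  have hdisj : Disjoint (∂ L) (U.image (G \ ·)) := (h.disjoint_shadow_image_sdiff G).mono
    (shadow_mono (filter_subset _ _)) (image_subset_image (filter_subset _ _))
  have hsmall : ∂ L ∪ U.image (G \ ·) ⊆ {S ∈ G.powerset | #S < s} := by
    refine union_subset (fun S hS => ?_) (fun S hS => ?_)
    · obtain ⟨A, hA, a, ha, rfl⟩ := mem_shadow_iff.1 hS
      obtain ⟨hA𝒜, hAs⟩ := mem_filter.1 hA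
      refine mem_filter.2 ⟨mem_powerset.2 ((erase_subset a A).trans (mem_powerset.1 (h𝒜 hA𝒜))), ?_⟩
      rw [card_erase_of_mem ha]
      have := card_pos.2 ⟨a, ha⟩
      omega
    · obtain ⟨Y, hY, rfl⟩ := mem_image.1 hS
      obtain ⟨hY𝒜, hYs⟩ := mem_filter.1 hY
      refine mem_filter.2 ⟨mem_powerset.2 sdiff_subset, ?_⟩
      have hYG := mem_powerset.1 (h𝒜 hY𝒜)
      rw [card_sdiff_of_subset hYG]
      have := card_le_card hYG
      omega
  calc #{A ∈ 𝒜 | #A ≤ s ∨ #G < #A + s} ≤ #L + #U := by rw [filter_or]; exact card_union_le _ _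
    _ ≤ #(∂ L) + #(U.image (G \ ·)) := by
        rw [hU]
        exact add_le_add_left (card_le_card_shadow_of_intersecting
          (h.intersecting.mono (coe_subset.2 (filter_subset _ _)))) _
    _ = #(∂ L ∪ U.image (G \ ·)) := (card_union_of_disjoint hdisj).symm
    _ ≤ #{S ∈ G.powerset | #S < s} := card_le_card hsmall

lemma TwoIntersecting.card_slice_le {t : ℕ} (h𝒜 : 𝒜 ⊆ (range (2 * t + 1)).powerset)
    (h : TwoIntersecting 𝒜) : #(𝒜 # (t + 1)) ≤ (2 * t).choose (t + 1) := by
  rcases t with _ | t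
  · suffices 𝒜 # 1 = ∅ by simp [this]
    refine eq_empty_of_forall_notMem fun A hA => ?_
    have := h A (slice_subset hA) A (slice_subset hA)
    rw [inter_self, sized_slice hA] at this
    omega
  set f : ℕ → Fin (2 * t + 3) := Fin.ofNat _
  have hf : Set.InjOn f (range (2 * t + 3)) := fun a ha b hb hab => by
    have := congrArg Fin.val hab
    simp only [f, Fin.val_ofNat, coe_range, Set.mem_Iio] at this ha hb
    rwa [Nat.mod_eq_of_lt ha, Nat.mod_eq_of_lt hb] at this
  set ℬ := (𝒜 # (t + 2)).image (·.image f)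
  have hslice : 𝒜 # (t + 2) ⊆ (range (2 * t + 3)).powerset := slice_subset.trans h𝒜
  have hℬ : #ℬ = #(𝒜 # (t + 2)) :=
    card_image_of_injOn ((image_injOn_powerset_of_injOn hf).mono (coe_subset.2 hslice))
  have hℬk : (ℬ : Set (Finset (Fin (2 * t + 3)))).Sized (t + 2) := by
    intro X hX
    obtain ⟨A, hA, rfl⟩ := mem_image.1 hX
    rw [card_image_of_injOn (hf.mono (coe_subset.2 (mem_powerset.1 (hslice hA)))), sized_slice hA]
  have hcompl : (ℬᶜˢ : Set (Finset (Fin (2 * t + 3)))).Sized (t + 1) := by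
    intro X hX
    rw [mem_coe, mem_compls] at hX
    rw [← compl_compl X, card_compl, hℬk hX, Fintype.card_fin]
    omega
  have hEKR := erdos_ko_rado (((h.mono slice_subset).image hf hslice).intersecting_compls hℬk
    (by simp only [Fintype.card_fin]; omega)) hcompl (by omega)
  rw [card_compls, hℬ, show 2 * t + 3 - 1 = 2 * (t + 1) by omega] at hEKR
  rwa [← Nat.choose_symm (by omega), show 2 * (t + 1) - (t + 1 + 1) = t + 1 - 1 by omega]

theorem TwoIntersecting.card_add_choose_le_of_subset_range {n : ℕ}
    (h𝒜 : 𝒜 ⊆ (range n).powerset) (h : TwoIntersecting 𝒜) :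
    #𝒜 + (n - 1).choose ((n - 1) / 2) ≤ 2 ^ (n - 1) := by
  obtain ⟨s, rfl | rfl⟩ := Nat.even_or_odd' n
  · have hall : {A ∈ 𝒜 | #A ≤ s ∨ #(range (2 * s)) < #A + s} = 𝒜 :=
      filter_true_of_mem fun A _ => by rw [card_range]; omega
    have hsmall := h.card_filter_le h𝒜 s
    rw [hall, card_powerset_filter_card_lt, card_range] at hsmall
    rcases s with _ | m
    · simpa using hsmall
    · have := Nat.sum_range_choose_halfway_even m
      rw [show 2 * (m + 1) - 1 = 2 * m + 1 by omega, show (2 * m + 1) / 2 = m by omega]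
      rw [show 2 * (m + 1) = 2 * m + 2 by ring] at hsmall
      omega
  · have hsmall := h.card_filter_le h𝒜 s
    rw [card_powerset_filter_card_lt, card_range] at hsmall
    have hsplit : #𝒜 ≤ #{A ∈ 𝒜 | #A ≤ s ∨ 2 * s + 1 < #A + s} + #(𝒜 # (s + 1)) := by
      rw [← card_filter_add_card_filter_not fun A => #A ≤ s ∨ 2 * s + 1 < #A + s]
      gcongr
      intro A hA
      rw [mem_filter] at hA
      exact mem_slice.2 ⟨hA.1, by omega⟩
    have := h.card_slice_le h𝒜
    have := Nat.sum_range_choose_halfway_odd s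
    rw [show 2 * s + 1 - 1 = 2 * s by omega, show 2 * s / 2 = s by omega, pow_mul,
      show (2 : ℕ) ^ 2 = 4 from rfl]
    omega

end KatonaIntersection

/-- **Katona's intersection theorem** for `2`-intersecting families. -/
theorem TwoIntersecting.card_add_choose_le {α : Type*} [DecidableEq α] {G : Finset α}
    {𝒜 : Finset (Finset α)} (h𝒜 : 𝒜 ⊆ G.powerset) (h : TwoIntersecting 𝒜) :
    #𝒜 + (#G - 1).choose ((#G - 1) / 2) ≤ 2 ^ (#G - 1) := by
  set f : α → ℕ := fun a => G.toList.idxOf a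
  have hf : Set.InjOn f G := fun a ha b _ hab => (List.idxOf_inj (mem_toList.2 ha)).1 hab
  have hrange : 𝒜.image (·.image f) ⊆ (range #G).powerset := by
    intro X hX
    obtain ⟨A, hA, rfl⟩ := mem_image.1 hX
    refine mem_powerset.2 (image_subset_iff.2 fun a ha => mem_range.2 ?_)
    rw [← length_toList]
    exact List.idxOf_lt_length_iff.2 (mem_toList.2 (mem_powerset.1 (h𝒜 hA) ha))
  have := (h.image hf h𝒜).card_add_choose_le_of_subset_range hrange
  rwa [card_image_of_injOn ((image_injOn_powerset_of_injOn hf).mono (coe_subset.2 h𝒜))] at this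

section Complements

variable {α : Type*} [DecidableEq α] {M X Y : Finset α}

lemma card_powerset_filter_sdiff (M : Finset α) (p : Finset α → Prop) [DecidablePred p] :
    #{A ∈ M.powerset | p (M \ A)} = #{A ∈ M.powerset | p A} := by
  refine card_nbij' (M \ ·) (M \ ·) ?_ ?_ ?_ ?_ <;> intro A hA <;>
    simp only [mem_coe, mem_filter, mem_powerset] at hA ⊢
  · exact ⟨sdiff_subset, hA.2⟩
  · exact ⟨sdiff_subset, by rw [sdiff_sdiff_eq_self hA.1]; exact hA.2⟩
  · exact sdiff_sdiff_eq_self hA.1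
  · exact sdiff_sdiff_eq_self hA.1

lemma two_pow_card_le_card_filter_add (M : Finset α) (q : Finset α → Prop) :
    2 ^ #M ≤ #{A ∈ M.powerset | q A ∧ q (M \ A)} + 2 * #{A ∈ M.powerset | ¬q (M \ A)} := by
  have hfail : #{A ∈ M.powerset | ¬(q A ∧ q (M \ A))} ≤
      #{A ∈ M.powerset | ¬q A} + #{A ∈ M.powerset | ¬q (M \ A)} := by
    refine (card_le_card fun A hA => ?_).trans (card_union_le _ _)
    rw [mem_filter, not_and_or] at hA
    rw [mem_union, mem_filter, mem_filter]
    tauto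
  have := card_powerset_filter_sdiff M fun A => ¬q A
  rw [← card_powerset, ← card_filter_add_card_filter_not fun A => q A ∧ q (M \ A)]
  omega

lemma erase_subset_sdiff_of_inter_eq_singleton {c : α} (hXM : X ⊆ M) (h : X ∩ Y = {c}) :
    X.erase c ⊆ M \ Y := by
  intro a ha
  obtain ⟨hac, haX⟩ := mem_erase.1 ha
  exact mem_sdiff.2 ⟨hXM haX, fun haY => hac (mem_singleton.1 (h ▸ mem_inter.2 ⟨haX, haY⟩))⟩

end Complements

end Finset

section EF1

variable {α : Type*} [DecidableEq α] {M X : Finset α} {u : Finset α → ℝ}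

lemma lt_of_not_EF1_sdiff (hXM : X ⊆ M) (h : ¬EF1 M u (M \ X)) :
    u (M \ X) < u X ∧ ∀ c ∈ X, u (M \ X) < u (X.erase c) := by
  rw [EF1, Finset.sdiff_sdiff_eq_self hXM] at h
  push Not at h
  exact h

theorem twoIntersecting_filter_not_EF1_sdiff (hu : ∀ A B : Finset α, A ⊆ B → u A ≤ u B) :
    TwoIntersecting {X ∈ M.powerset | ¬EF1 M u (M \ X)} := by
  intro X hX Y hY
  rw [mem_filter, mem_powerset] at hX hY
  have hX' := lt_of_not_EF1_sdiff hX.1 hX.2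
  have hY' := lt_of_not_EF1_sdiff hY.1 hY.2
  by_contra! hlt
  obtain h0 | h1 : #(X ∩ Y) = 0 ∨ #(X ∩ Y) = 1 := by omega
  · rw [card_eq_zero, ← disjoint_iff_inter_eq_empty] at h0
    have hXY := hu _ _ (subset_sdiff.2 ⟨hX.1, h0⟩)
    have hYX := hu _ _ (subset_sdiff.2 ⟨hY.1, h0.symm⟩)
    linarith [hX'.1, hY'.1]
  · obtain ⟨c, hc⟩ := card_eq_one.1 h1
    obtain ⟨hcX, hcY⟩ := mem_inter.1 (hc ▸ mem_singleton_self c)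
    have hXY := hu _ _ (erase_subset_sdiff_of_inter_eq_singleton hX.1 hc)
    have hYX := hu _ _ (erase_subset_sdiff_of_inter_eq_singleton hY.1 ((inter_comm Y X).trans hc))
    linarith [hX'.2 c hcX, hY'.2 c hcY]

end EF1

lemma choose_half_le_of_two_pow_le {m g b : ℕ} (hg : 2 ^ m ≤ g + 2 * b)
    (hb : b + (m - 1).choose ((m - 1) / 2) ≤ 2 ^ (m - 1)) :
    (if Even m then m.choose (m / 2) else 2 * (m - 1).choose ((m - 1) / 2)) ≤ g := by
  rcases m with _ | m
  · simp only [pow_zero, zero_tsub, Nat.zero_div, Nat.choose_self, Even.zero, ↓reduceIte]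
      at hg hb ⊢
    omega
  have hcentral : (if Even (m + 1) then (m + 1).choose ((m + 1) / 2) else 2 * m.choose (m / 2)) =
      2 * m.choose (m / 2) := by
    split_ifs with he
    · obtain ⟨s, rfl⟩ : ∃ s, m = 2 * s + 1 := by
        obtain ⟨s, hs⟩ := he
        exact ⟨s - 1, by omega⟩
      rw [show (2 * s + 1 + 1) / 2 = s + 1 by omega, show (2 * s + 1) / 2 = s by omega,
        Nat.choose_succ_succ', Nat.choose_symm_half]
      ring
    · rfl
  simp only [add_tsub_cancel_right] at hb ⊢
  rw [hcentral]
  rw [pow_succ] at hg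
  omega

theorem EF1_partitions_count_general {α : Type*} [DecidableEq α] (M : Finset α)
    (u : Finset α → ℝ)
    (hum : ∀ A B : Finset α, A ⊆ B → u A ≤ u B) :
    (if Even M.card then Nat.choose M.card (M.card / 2)
      else 2 * Nat.choose (M.card - 1) ((M.card - 1) / 2)) ≤
      (M.powerset.filter fun A => EF1 M u A ∧ EF1 M u (M \ A)).card :=
  choose_half_le_of_two_pow_le (two_pow_card_le_card_filter_add M (EF1 M u))
    ((twoIntersecting_filter_not_EF1_sdiff hum).card_add_choose_le (filter_subset _ _))

/-- For a single monotonic valuation `u` on `m` items, the number of bundles `A ⊆ M` such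
that both `A` and `M \ A` are EF1 is at least `C(m, m/2)` for even `m` and at least
`2·C(m-1, (m-1)/2)` for odd `m`. -/
theorem EF1_partitions_count {α : Type*} [DecidableEq α] (M : Finset α)
    (u : Finset α → ℝ) (hu0 : u ∅ = 0)
    (hum : ∀ A B : Finset α, A ⊆ B → u A ≤ u B) :
    (if Even M.card then Nat.choose M.card (M.card / 2)
      else 2 * Nat.choose (M.card - 1) ((M.card - 1) / 2)) ≤
      (M.powerset.filter fun A => EF1 M u A ∧ EF1 M u (M \ A)).card :=
  EF1_partitions_count_general M u hum
end
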